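/- arXiv:1005.5002 — 8 statements merged into one kernel-verified Lean document; each statement's English description precedes it below -/
import Mathlib

section
/- (Britton's lemma for HNN extensions.) Let Γ = HNN(H, Σ, θ). If g₀ t^{ε₁} g₁ ⋯ t^{εₙ} gₙ is a reduced expression with n ≥ 1, then the element it represents in Γ is not equal to the identity. -/
open HNNExtension NormalWord

/-- **Britton's lemma for HNN extensions.**
Let `Γ = HNN(H, Σ, θ)` (in Mathlib: `HNNExtension H A B φ` with `A = Σ`, `B = θ(Σ)` and
`φ` the isomorphism induced by `θ`, so that `t a t⁻¹ = φ a` for `a ∈ A`).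
If `g₀ t^{ε₁} g₁ ⋯ t^{εₙ} gₙ` is a reduced expression with `n ≥ 1` (i.e. a
`ReducedWord` whose list of `t`-letters is nonempty; its `chain` field says exactly
`gᵢ ∉ Σ_{εᵢ}` whenever `εᵢ ≠ ε_{i+1}`), then the element of `Γ` it represents is
not the identity. -/
theorem britton_lemma {H : Type*} [Group H] {A B : Subgroup H} (φ : A ≃* B)
    (w : HNNExtension.NormalWord.ReducedWord H A B) (hw : w.toList ≠ []) :
    w.prod φ ≠ 1 := by
  intro h
  exact hw (HNNExtension.ReducedWord.toList_eq_nil_of_mem_of_range φ w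
    (h ▸ one_mem _))
end

section
/- Let Γ = HNN(H, Σ, θ) and let 𝒯 be its Bass-Serre tree, with vertex set V(𝒯) = Γ/H, positive edge set E⁺(𝒯) = Γ/Σ, source map s(gΣ) = gH and range map r(gΣ) = g t⁻¹ H. Then for all g ∈ Γ, the geodesic distance in 𝒯 between the vertices H and g·H equals the length |g| of g (the number of occurrences of t^{±1} in a reduced expression of g, with |e| = 0). -/
open HNNExtension

/-- The Bass-Serre tree of `Γ = HNN(H, Σ, θ)` as a graph on the vertex set `Γ/H`
(`H` embedded via `of`): two cosets are adjacent when they are the source `gH` and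
the range `g t⁻¹ H` of some edge `gΣ`. -/
def bassSerreGraph {G : Type*} [Group G] (A B : Subgroup G) (φ : A ≃* B) :
    SimpleGraph (HNNExtension G A B φ ⧸ (of : G →* HNNExtension G A B φ).range) where
  Adj u v := u ≠ v ∧ ∃ g : HNNExtension G A B φ,
    (u = QuotientGroup.mk g ∧ v = QuotientGroup.mk (g * t⁻¹)) ∨
    (v = QuotientGroup.mk g ∧ u = QuotientGroup.mk (g * t⁻¹))
  symm := by constructor; rintro u v ⟨hne, g, hg⟩; exact ⟨hne.symm, g, hg.symm⟩
  loopless := by constructor; rintro v ⟨hne, _⟩; exact hne rfl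

/-!
Adjacent vertices `xH ≠ yH` of the tree satisfy `y ∈ x H t^{±1} H`. Hence the prefixes of a
reduced expression `g = h₀ t^{ε₁} h₁ ⋯ t^{εₙ} hₙ` trace a walk of length at most `n` from
`H` to `gH`, and conversely a walk of length `n` from `gH` back to `H` writes `g` as a
product of `n` letters `t^{±1}` and elements of `H`. Reducing that product one letter at a
time from the right never makes it longer, and all reduced expressions of `g` have the same
length by Britton's lemma, so `|g| ≤ n`.
-/

namespace HNNExtension

open NormalWord

variable {G : Type*} [Group G] {A B : Subgroup G} {φ : A ≃* B}

theorem t_zpow_mul_of_mul_t_zpow_neg_mem_range {u : ℤˣ} {x : G} (hx : x ∈ toSubgroup A B u) :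
    t ^ (u : ℤ) * of x * t ^ (-(u : ℤ)) ∈ (of : G →* HNNExtension G A B φ).range := by
  rcases Int.units_eq_one_or u with rfl | rfl
  · exact ⟨φ ⟨x, hx⟩, by rw [equiv_eq_conj (φ := φ) ⟨x, hx⟩]; simp⟩
  · exact ⟨φ.symm ⟨x, hx⟩, by rw [equiv_symm_eq_conj (φ := φ) ⟨x, hx⟩]; simp⟩

namespace NormalWord.ReducedWord

theorem prod_append_singleton (head : G) (l : List (ℤˣ × G)) (a : ℤˣ × G)
    (chain : (l ++ [a]).IsChain fun a b => a.2 ∈ toSubgroup A B a.1 → a.1 = b.1) :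
    (⟨head, l ++ [a], chain⟩ : ReducedWord G A B).prod φ =
      (⟨head, l, chain.left_of_append⟩ : ReducedWord G A B).prod φ * t ^ (a.1 : ℤ) *
        of a.2 := by
  simp [ReducedWord.prod, mul_assoc]

theorem length_eq_of_prod_eq {w₁ w₂ : ReducedWord G A B} (h : w₁.prod φ = w₂.prod φ) :
    w₁.toList.length = w₂.toList.length := by
  simpa only [List.length_map] using
    congrArg List.length (HNNExtension.ReducedWord.map_fst_eq_and_of_prod_eq φ h).1

theorem exists_prod_eq_mul_of (w : ReducedWord G A B) (h : G) :
    ∃ w' : ReducedWord G A B, w'.prod φ = w.prod φ * of h ∧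
      w'.toList.length = w.toList.length := by
  obtain ⟨head, toList, chain⟩ := w
  rcases List.eq_nil_or_concat' toList with rfl | ⟨l, a, rfl⟩
  · exact ⟨⟨head * h, [], List.isChain_nil⟩, by simp [ReducedWord.prod], rfl⟩
  · obtain ⟨hl, -, hlast⟩ := List.isChain_append.1 chain
    refine ⟨⟨head, l ++ [(a.1, a.2 * h)],
      hl.append (List.isChain_singleton _) (by simpa using hlast)⟩, ?_, by simp⟩
    simp only [prod_append_singleton, map_mul, mul_assoc]

theorem exists_prod_eq_mul_t_zpow (w : ReducedWord G A B) (u : ℤˣ) :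
    ∃ w' : ReducedWord G A B, w'.prod φ = w.prod φ * t ^ (u : ℤ) ∧
      w'.toList.length ≤ w.toList.length + 1 := by
  obtain ⟨head, toList, chain⟩ := w
  rcases List.eq_nil_or_concat' toList with rfl | ⟨l, a, rfl⟩
  · exact ⟨⟨head, [(u, 1)], List.isChain_singleton _⟩, by simp [ReducedWord.prod], by simp⟩
  -- either `t^u` cancels against the last letter `t^{a.1} a.2` (a pinch), or it is appended
  by_cases hcancel : a.2 ∈ toSubgroup A B a.1 ∧ a.1 = -u
  · obtain ⟨y, hy⟩ := t_zpow_mul_of_mul_t_zpow_neg_mem_range (φ := φ) hcancel.1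
    obtain ⟨w', hw', hlen⟩ :=
      exists_prod_eq_mul_of (φ := φ) ⟨head, l, chain.left_of_append⟩ y
    refine ⟨w', ?_, by simp [hlen]; omega⟩
    rw [hw', hy, prod_append_singleton, hcancel.2]
    simp [mul_assoc]
  · have hrel : a.2 ∈ toSubgroup A B a.1 → a.1 = u := fun hmem => by
      rcases Int.units_eq_one_or a.1 with h | h <;>
        rcases Int.units_eq_one_or u with h' | h' <;> simp_all
    refine ⟨⟨head, l ++ [a] ++ [(u, 1)],
      chain.append (List.isChain_singleton _) (by simpa using hrel)⟩,
      by simp [ReducedWord.prod, mul_assoc], by simp⟩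

end NormalWord.ReducedWord

open QuotientGroup SimpleGraph

theorem exists_walk_mk_mul_t_zpow_mul_of (x : HNNExtension G A B φ) (u : ℤˣ) (h : G) :
    ∃ p : (bassSerreGraph A B φ).Walk (mk x) (mk (x * t ^ (u : ℤ) * of h)),
      p.length ≤ 1 := by
  rw [mk_mul_of_mem _ (MonoidHom.mem_range.2 ⟨h, rfl⟩)]
  by_cases heq : (mk x : HNNExtension G A B φ ⧸ (of : G →* HNNExtension G A B φ).range) =
      mk (x * t ^ (u : ℤ))
  · exact ⟨Walk.nil.copy rfl heq, by simp⟩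
  · have hadj : (bassSerreGraph A B φ).Adj (mk x) (mk (x * t ^ (u : ℤ))) := by
      refine ⟨heq, ?_⟩
      rcases Int.units_eq_one_or u with rfl | rfl
      · exact ⟨x * t, Or.inr ⟨by simp, by simp⟩⟩
      · exact ⟨x, Or.inl ⟨rfl, by simp⟩⟩
    exact ⟨hadj.toWalk, by simp⟩

theorem exists_walk_mk_mul_prod_length_le (x : HNNExtension G A B φ) (l : List (ℤˣ × G)) :
    ∃ p : (bassSerreGraph A B φ).Walk (mk x)
      (mk (x * (l.map fun a => t ^ (a.1 : ℤ) * of a.2).prod)), p.length ≤ l.length := by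
  induction l generalizing x with
  | nil => exact ⟨Walk.nil.copy rfl (by simp), by simp⟩
  | cons a l ih =>
    obtain ⟨p, hp⟩ := exists_walk_mk_mul_t_zpow_mul_of x a.1 a.2
    obtain ⟨q, hq⟩ := ih (x * t ^ (a.1 : ℤ) * of a.2)
    refine ⟨(p.append q).copy rfl (by simp [mul_assoc]), ?_⟩
    simp only [Walk.length_copy, Walk.length_append, List.length_cons]
    omega

theorem exists_walk_mk_prod_length_le (w : ReducedWord G A B) :
    ∃ p : (bassSerreGraph A B φ).Walk (mk 1) (mk (w.prod φ)), p.length ≤ w.toList.length := by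
  unfold ReducedWord.prod
  obtain ⟨p, hp⟩ := exists_walk_mk_mul_prod_length_le (φ := φ) (of w.head) w.toList
  have hhead : (mk (of w.head) :
      HNNExtension G A B φ ⧸ (of : G →* HNNExtension G A B φ).range) = mk 1 := by
    simpa using mk_mul_of_mem (1 : HNNExtension G A B φ) (MonoidHom.mem_range.2 ⟨w.head, rfl⟩)
  exact ⟨p.copy hhead rfl, by rwa [Walk.length_copy]⟩

theorem exists_eq_mk_mul_of_mul_t_zpow_of_adj {g : HNNExtension G A B φ}
    {v : HNNExtension G A B φ ⧸ (of : G →* HNNExtension G A B φ).range}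
    (hadj : (bassSerreGraph A B φ).Adj (mk g) v) :
    ∃ (h : G) (u : ℤˣ), v = mk (g * of h * t ^ (u : ℤ)) := by
  obtain ⟨-, k, ⟨hgk, rfl⟩ | ⟨rfl, hgk⟩⟩ := hadj
  · obtain ⟨h, hh⟩ := QuotientGroup.eq.1 hgk
    exact ⟨h, -1, by simp [hh]⟩
  · obtain ⟨h, hh⟩ := QuotientGroup.eq.1 hgk
    exact ⟨h, 1, by simp [hh]⟩

theorem exists_reducedWord_length_le_of_walk
    {v v₀ : HNNExtension G A B φ ⧸ (of : G →* HNNExtension G A B φ).range}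
    (p : (bassSerreGraph A B φ).Walk v v₀) (hv₀ : v₀ = mk 1) {g : HNNExtension G A B φ}
    (hv : v = mk g) :
    ∃ w : ReducedWord G A B, w.prod φ = g ∧ w.toList.length ≤ p.length := by
  induction p generalizing g with
  | nil =>
    obtain ⟨h, hh⟩ := QuotientGroup.eq.1 (hv₀.symm.trans hv)
    exact ⟨⟨h, [], List.isChain_nil⟩, by simp [ReducedWord.prod, hh], le_rfl⟩
  | cons hadj p ih =>
    obtain ⟨h, u, rfl⟩ := exists_eq_mk_mul_of_mul_t_zpow_of_adj (hv ▸ hadj)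
    obtain ⟨w₁, hw₁, hlen₁⟩ := ih hv₀ rfl
    obtain ⟨w₂, hw₂, hlen₂⟩ := w₁.exists_prod_eq_mul_t_zpow (-u)
    obtain ⟨w₃, hw₃, hlen₃⟩ := w₂.exists_prod_eq_mul_of h⁻¹
    refine ⟨w₃, by rw [hw₃, hw₂, hw₁]; simp [mul_assoc], ?_⟩
    rw [Walk.length_cons]
    omega

end HNNExtension

/-- In the Bass-Serre tree of `Γ = HNN(H, Σ, θ)` (vertices `Γ/H`, positive edges `Γ/Σ`,
source `s(gΣ) = gH`, range `r(gΣ) = g t⁻¹ H`), the geodesic distance between the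
vertices `H` and `g·H` equals the length `|g|` of `g`, i.e. the number of occurrences
of `t^{±1}` in a reduced expression of `g` (with `|e| = 0`; a reduced expression is a
`ReducedWord` representing `g`, its length being the length of its list of `t`-letters). -/
theorem bassSerre_dist_eq_length {G : Type*} [Group G] (A B : Subgroup G) (φ : A ≃* B)
    (g : HNNExtension G A B φ) (w : HNNExtension.NormalWord.ReducedWord G A B)
    (hw : w.prod φ = g) :
    (bassSerreGraph A B φ).dist
        (QuotientGroup.mk 1) (QuotientGroup.mk g) = w.toList.length := by
  subst hw
  obtain ⟨p, hp⟩ := exists_walk_mk_prod_length_le (φ := φ) w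
  obtain ⟨q, hq⟩ := p.reachable.exists_walk_length_eq_dist
  obtain ⟨w', hw', hlen⟩ := exists_reducedWord_length_le_of_walk q.reverse rfl rfl
  rw [SimpleGraph.Walk.length_reverse, hq,
    NormalWord.ReducedWord.length_eq_of_prod_eq hw'] at hlen
  exact le_antisymm ((SimpleGraph.dist_le p).trans hp) hlen
end

section
/- The Bass-Serre graph of an HNN extension Γ = HNN(H, Σ, θ) — with vertices Γ/H, positive edges Γ/Σ, source s(gΣ) = gH and range r(gΣ) = g t⁻¹H — is a tree, i.e. it is connected and contains no cycles. -/
/-!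
A path in the Bass-Serre graph starting at `γH` spells out a word `γ g₀ t^ε₁ g₁ ⋯ t^εₙ gₙ`
whose prefixes, taken modulo `H`, are the vertices of the path. A pinch `t^ε g t^-ε` with `g` in the
subgroup attached to `ε` collapses to an element of `H`, so it would send the path back to the
vertex it came from; hence a path without backtracking spells a reduced word. A cycle spells a
reduced word of positive length whose product lies in `H`, which Britton's lemma forbids.
Connectedness holds because `H` and `t` generate `Γ`. By Britton's lemma again, `t g t⁻¹ ∈ H`
forces `g ∈ Σ`, so an edge `γΣ` is determined by its endpoints `γH` and `γt⁻¹H`.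
-/

open HNNExtension

namespace SimpleGraph.Walk

variable {V : Type*} {G : SimpleGraph V} {u v : V}

def NoBacktrack (p : G.Walk u v) : Prop :=
  ∀ i, i + 2 ≤ p.length → p.getVert i ≠ p.getVert (i + 2)

lemma IsPath.noBacktrack {p : G.Walk u v} (hp : p.IsPath) : p.NoBacktrack := fun i hi h => by
  have := hp.getVert_injOn (by simp only [Set.mem_ofPred_eq]; omega)
    (by simp only [Set.mem_ofPred_eq]; omega) h
  omega

lemma IsCycle.noBacktrack {p : G.Walk u u} (hp : p.IsCycle) : p.NoBacktrack :=
  fun i hi => hp.getVert_sub_one_ne_getVert_add_one (i := i + 1) (by omega)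

lemma NoBacktrack.of_cons {w : V} {h : G.Adj u w} {q : G.Walk w v}
    (hp : (q.cons h).NoBacktrack) : q.NoBacktrack := fun i hi => by
  simpa only [getVert_cons_succ] using hp (i + 1) (by simp only [length_cons]; omega)

lemma NoBacktrack.getVert_one_ne {w : V} {h : G.Adj u w} {q : G.Walk w v}
    (hp : (q.cons h).NoBacktrack) (hq : 1 ≤ q.length) : q.getVert 1 ≠ u := fun heq => by
  refine hp 0 (by simp only [length_cons]; omega) ?_
  rw [getVert_zero, getVert_cons_succ, heq]

end SimpleGraph.Walk

open HNNExtension.NormalWord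

namespace HNNExtension

variable {G : Type*} [Group G] {A B : Subgroup G} {φ : A ≃* B}

namespace NormalWord.ReducedWord

def cons (g : G) (u : ℤˣ) (w : ReducedWord G A B)
    (hw : ∀ x ∈ w.toList.head?, w.head ∈ toSubgroup A B u → u = x.1) : ReducedWord G A B :=
  ⟨g, (u, w.head) :: w.toList, List.isChain_cons.2 ⟨hw, w.chain⟩⟩

lemma prod_cons (g : G) (u : ℤˣ) (w : ReducedWord G A B)
    (hw : ∀ x ∈ w.toList.head?, w.head ∈ toSubgroup A B u → u = x.1) :
    (cons g u w hw).prod φ = of g * t ^ (u : ℤ) * w.prod φ := by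
  simp [cons, ReducedWord.prod, mul_assoc]

end NormalWord.ReducedWord

lemma t_zpow_notMem_range (u : ℤˣ) : (t ^ (u : ℤ) : HNNExtension G A B φ) ∉ (of : G →* _).range :=
  fun h => by
    simpa using ReducedWord.toList_eq_nil_of_mem_of_range φ
      ⟨1, [(u, 1)], List.isChain_singleton _⟩ (by simpa [ReducedWord.prod] using h)

lemma t_zpow_mul_of_mul_t_zpow_neg_mem_range_iff (u : ℤˣ) (g : G) :
    (t ^ (u : ℤ) * of g * t ^ (-u : ℤ) : HNNExtension G A B φ) ∈ (of : G →* _).range ↔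
      g ∈ toSubgroup A B u := by
  constructor
  · intro h
    by_contra hg
    have hchain : [(u, g), (-u, 1)].IsChain (fun a b => a.2 ∈ toSubgroup A B a.1 → a.1 = b.1) :=
      List.isChain_pair.2 fun hg' => absurd hg' hg
    simpa using ReducedWord.toList_eq_nil_of_mem_of_range φ ⟨1, _, hchain⟩
      (by simpa [ReducedWord.prod, mul_assoc] using h)
  · intro hg
    rcases Int.units_eq_one_or u with rfl | rfl
    · exact ⟨φ ⟨g, hg⟩, by simp [equiv_eq_conj]⟩
    · exact ⟨φ.symm ⟨g, hg⟩, by simp [equiv_symm_eq_conj]⟩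

local notation "Γ" => HNNExtension G A B φ
local notation "V" => Γ ⧸ MonoidHom.range (of : G →* Γ)

lemma mk_eq_mk_iff_exists_eq_mul_of {γ γ' : Γ} :
    (QuotientGroup.mk γ : V) = QuotientGroup.mk γ' ↔ ∃ g : G, γ' = γ * of g := by
  rw [QuotientGroup.eq]
  exact ⟨fun ⟨g, hg⟩ => ⟨g, by rw [hg, mul_inv_cancel_left]⟩,
    fun ⟨g, hg⟩ => ⟨g, by rw [hg, inv_mul_cancel_left]⟩⟩

lemma bassSerreGraph_adj_mk_iff {γ : Γ} {v : V} :
    (bassSerreGraph A B φ).Adj (QuotientGroup.mk γ) v ↔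
      ∃ (g : G) (u : ℤˣ), v = QuotientGroup.mk (γ * of g * t ^ (u : ℤ)) := by
  constructor
  · rintro ⟨-, δ, ⟨hγ, rfl⟩ | ⟨rfl, hγ⟩⟩
    · obtain ⟨g, rfl⟩ := mk_eq_mk_iff_exists_eq_mul_of.1 hγ
      exact ⟨g, -1, by simp⟩
    · obtain ⟨g, hg⟩ := mk_eq_mk_iff_exists_eq_mul_of.1 hγ
      exact ⟨g, 1, by rw [← hg]; simp⟩
  · rintro ⟨g, u, rfl⟩
    refine ⟨fun h => ?_, ?_⟩
    · obtain ⟨g', hg'⟩ := mk_eq_mk_iff_exists_eq_mul_of.1 h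
      refine t_zpow_notMem_range u ⟨g⁻¹ * g', mul_left_cancel (a := γ * of g) ?_⟩
      rw [hg']
      simp [mul_assoc]
    rcases Int.units_eq_one_or u with rfl | rfl
    · exact ⟨γ * of g * t, Or.inr ⟨by simp, by simp [QuotientGroup.mk_mul_of_mem]⟩⟩
    · exact ⟨γ * of g, Or.inl ⟨by simp [QuotientGroup.mk_mul_of_mem], by simp⟩⟩

lemma bassSerreGraph_reachable_mk_mul (γ δ : Γ) :
    (bassSerreGraph A B φ).Reachable (QuotientGroup.mk δ) (QuotientGroup.mk (δ * γ)) := by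
  induction γ using induction_on generalizing δ with
  | of g => rw [QuotientGroup.mk_mul_of_mem δ (MonoidHom.mem_range.2 ⟨g, rfl⟩)]
  | t => exact (bassSerreGraph_adj_mk_iff.2 ⟨1, 1, by simp⟩).reachable
  | mul x y hx hy => simpa only [mul_assoc] using (hx δ).trans (hy (δ * x))
  | inv x hx => simpa using (hx (δ * x⁻¹)).symm

lemma bassSerreGraph_connected : (bassSerreGraph A B φ).Connected := by
  rw [SimpleGraph.connected_iff_exists_forall_reachable]
  refine ⟨QuotientGroup.mk 1, fun v => ?_⟩
  obtain ⟨γ, rfl⟩ := QuotientGroup.mk_surjective v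
  simpa using bassSerreGraph_reachable_mk_mul γ 1

/-- The clause on `p.getVert 1` identifies the first letter of the word; the induction step
needs it to see that the letter prepended next does not create a pinch. -/
lemma exists_reducedWord_of_noBacktrack {u v : V} (p : (bassSerreGraph A B φ).Walk u v)
    (hp : p.NoBacktrack) (γ : Γ) (hu : u = QuotientGroup.mk γ) :
    ∃ w : ReducedWord G A B, v = QuotientGroup.mk (γ * w.prod φ) ∧
      w.toList.length = p.length ∧
      ∀ x ∈ w.toList.head?, p.getVert 1 = QuotientGroup.mk (γ * of w.head * t ^ (x.1 : ℤ)) := by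
  induction p generalizing γ with
  | nil => exact ⟨ReducedWord.empty G A B, by simpa [ReducedWord.prod] using hu, by simp, by simp⟩
  | @cons u u' v h q ih =>
    subst hu
    obtain ⟨g, ε, rfl⟩ := bassSerreGraph_adj_mk_iff.1 h
    obtain ⟨w, hv, hlen, hhead⟩ := ih hp.of_cons _ rfl
    have hreduced : ∀ x ∈ w.toList.head?, w.head ∈ toSubgroup A B ε → ε = x.1 := by
      intro x hx hmem
      by_contra hne
      have hlen' : 1 ≤ q.length := by
        rw [← hlen]
        exact List.length_pos_of_ne_nil (by rintro h; simp [h] at hx)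
      refine hp.getVert_one_ne hlen' ?_
      have hpinch := (t_zpow_mul_of_mul_t_zpow_neg_mem_range_iff (φ := φ) ε w.head).2 hmem
      rw [hhead x hx, Int.units_ne_iff_eq_neg.1 (Ne.symm hne)]
      calc (QuotientGroup.mk (γ * of g * t ^ (ε : ℤ) * of w.head * t ^ ((-ε : ℤˣ) : ℤ)) : V)
          = QuotientGroup.mk (γ * of g * (t ^ (ε : ℤ) * of w.head * t ^ (-ε : ℤ))) := by
            simp only [mul_assoc, Units.val_neg]
        _ = QuotientGroup.mk (γ * of g) := QuotientGroup.mk_mul_of_mem _ hpinch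
        _ = QuotientGroup.mk γ := QuotientGroup.mk_mul_of_mem _ (MonoidHom.mem_range.2 ⟨g, rfl⟩)
    refine ⟨ReducedWord.cons g ε w hreduced, ?_, by simp [ReducedWord.cons, hlen], ?_⟩
    · rw [hv, ReducedWord.prod_cons]
      simp only [mul_assoc]
    · intro x hx
      simp only [ReducedWord.cons, List.head?_cons, Option.mem_def, Option.some_inj] at hx
      subst hx
      rw [SimpleGraph.Walk.getVert_cons_succ, SimpleGraph.Walk.getVert_zero]
      rfl

lemma bassSerreGraph_isAcyclic : (bassSerreGraph A B φ).IsAcyclic := by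
  intro v c hc
  obtain ⟨γ, rfl⟩ := QuotientGroup.mk_surjective v
  obtain ⟨w, hw, hlen, -⟩ := exists_reducedWord_of_noBacktrack c hc.noBacktrack γ rfl
  obtain ⟨g, hg⟩ := mk_eq_mk_iff_exists_eq_mul_of.1 hw
  have hnil := ReducedWord.toList_eq_nil_of_mem_of_range φ w ⟨g, mul_left_cancel hg.symm⟩
  have := hc.three_le_length
  simp [hnil] at hlen
  omega

end HNNExtension

/-- **The Bass-Serre graph of an HNN extension is a tree.**
The Bass-Serre graph of `Γ = HNN(H, Σ, θ)` — vertices `Γ/H`, positive edges `Γ/Σ`,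
source `s(gΣ) = gH`, range `r(gΣ) = g t⁻¹ H` — is a tree: it is connected and has no
cycles (`SimpleGraph.IsTree`), and moreover distinct edges `gΣ ∈ Γ/Σ` have distinct
pairs (source, range), so that the graph with its parallel edges is itself a tree. -/
theorem bassSerre_isTree {G : Type*} [Group G] (A B : Subgroup G) (φ : A ≃* B) :
    (bassSerreGraph A B φ).IsTree ∧
      ∀ γ γ' : HNNExtension G A B φ,
        (QuotientGroup.mk γ : HNNExtension G A B φ ⧸ (of : G →* HNNExtension G A B φ).range) =
            QuotientGroup.mk γ' →
        (QuotientGroup.mk (γ * t⁻¹) : HNNExtension G A B φ ⧸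
            (of : G →* HNNExtension G A B φ).range) = QuotientGroup.mk (γ' * t⁻¹) →
        (QuotientGroup.mk γ : HNNExtension G A B φ ⧸
            A.map (of : G →* HNNExtension G A B φ)) = QuotientGroup.mk γ' := by
  refine ⟨⟨bassSerreGraph_connected, bassSerreGraph_isAcyclic⟩, fun γ γ' hsource hrange => ?_⟩
  obtain ⟨g, rfl⟩ := mk_eq_mk_iff_exists_eq_mul_of.1 hsource
  obtain ⟨g', hg'⟩ := mk_eq_mk_iff_exists_eq_mul_of.1 hrange
  have hg : g ∈ A := by
    refine (t_zpow_mul_of_mul_t_zpow_neg_mem_range_iff (φ := φ) 1 g).1 ⟨g', ?_⟩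
    rw [Units.val_one, zpow_one, zpow_neg_one, ← mul_right_inj (γ * t⁻¹), ← hg']
    group
  exact QuotientGroup.eq.2 ⟨g, hg, by simp⟩
end

section
/- Let Γ = HNN(H, Σ, θ) with stable letter t. Then t⁻¹ H t ∩ H = Σ inside Γ. -/
open HNNExtension

/-- Let `Γ = HNN(H, Σ, θ)` with stable letter `t` (in Mathlib: `HNNExtension H A B φ`
with `A = Σ`, `B = θ(Σ)` and `t a t⁻¹ = φ a` for `a ∈ A`, `H` embedded via `of`).
Then `t⁻¹ H t ∩ H = Σ` inside `Γ`: an element of `Γ` lies both in the image of `H`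
and in `t⁻¹ (image of H) t` if and only if it is the image of an element of `Σ = A`. -/
theorem t_inv_H_t_inter_H_eq_sigma {H : Type*} [Group H] (A B : Subgroup H) (φ : A ≃* B)
    (x : HNNExtension H A B φ) :
    ((∃ h : H, x = t⁻¹ * of h * t) ∧ (∃ k : H, x = of k)) ↔ ∃ a ∈ A, x = of a := by
  constructor
  · rintro ⟨⟨h, rfl⟩, k, hk⟩
    by_cases hB : h ∈ B
    · exact ⟨φ.symm ⟨h, hB⟩, (φ.symm ⟨h, hB⟩).2,
        (equiv_symm_eq_conj (φ := φ) ⟨h, hB⟩).symm⟩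
    · exfalso
      have hchain : List.Chain' (fun a b : ℤˣ × H => a.2 ∈ toSubgroup A B a.1 → a.1 = b.1)
          [((-1 : ℤˣ), h), ((1 : ℤˣ), (1 : H))] := by
        refine List.isChain_cons_cons.2 ⟨fun hmem => ?_, List.isChain_singleton _⟩
        exact absurd hmem hB
      let w : NormalWord.ReducedWord H A B := ⟨1, [((-1 : ℤˣ), h), ((1 : ℤˣ), (1 : H))], hchain⟩
      have hprod : w.prod φ = t⁻¹ * of h * t := by
        simp [w, NormalWord.ReducedWord.prod, mul_assoc]
      have := ReducedWord.toList_eq_nil_of_mem_of_range φ w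
        (by rw [hprod, hk]; exact ⟨k, rfl⟩)
      simp [w] at this
  · rintro ⟨a, ha, rfl⟩
    refine ⟨⟨φ ⟨a, ha⟩, ?_⟩, ⟨a, rfl⟩⟩
    rw [← equiv_symm_eq_conj]
    simp
end

section
/- Let Γ = HNN(H, Σ, θ). If Σ ∩ θ(Σ) is finite, then there exist finitely many elements g₁, …, gₙ ∈ Γ such that the intersection ⋂ᵢ gᵢ Σ gᵢ⁻¹ is finite. -/
open HNNExtension

/-- Let `Γ = HNN(H, Σ, θ)` (Mathlib: `HNNExtension H A B φ` with `A = Σ` and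
`B = θ(Σ)`).  If `Σ ∩ θ(Σ)` is finite, then there exist finitely many elements
`g₁, …, gₙ ∈ Γ` such that the intersection `⋂ᵢ gᵢ Σ gᵢ⁻¹` is finite, where `Σ` is
viewed as the subgroup `A.map of` of `Γ`. -/
theorem exists_finite_intersection_of_conjugates {H : Type*} [Group H]
    (A B : Subgroup H) (φ : A ≃* B)
    (hfin : ((A ⊓ B : Subgroup H) : Set H).Finite) :
    ∃ (n : ℕ) (g : Fin n → HNNExtension H A B φ),
      (⋂ i : Fin n, (fun x => g i * x * (g i)⁻¹) ''
        ((A.map (of : H →* HNNExtension H A B φ)) : Set (HNNExtension H A B φ))).Finite := by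
  refine ⟨2, ![1, t], ?_⟩
  apply Set.Finite.subset (hfin.image (of : H →* HNNExtension H A B φ))
  intro x hx
  rw [Set.mem_iInter] at hx
  have h0 := hx 0
  have h1 := hx 1
  simp only [Matrix.cons_val_zero, Matrix.cons_val_one, Matrix.head_cons,
    Set.mem_image, SetLike.mem_coe, Subgroup.mem_map] at h0 h1
  obtain ⟨_, ⟨a, ha, rfl⟩, rfl⟩ := h0
  obtain ⟨_, ⟨b, hb, rfl⟩, hb'⟩ := h1
  have key : (t : HNNExtension H A B φ) * of b * t⁻¹ = of (φ ⟨b, hb⟩ : H) :=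
    (equiv_eq_conj (φ := φ) ⟨b, hb⟩).symm
  rw [key] at hb'
  simp only [one_mul, inv_one, mul_one] at hb' ⊢
  have hinj := of_injective (G := H) (A := A) (B := B) (φ := φ)
  have : a = (φ ⟨b, hb⟩ : H) := hinj hb'.symm
  refine ⟨a, ?_, rfl⟩
  exact ⟨ha, this ▸ (φ ⟨b, hb⟩).2⟩
end

section
/- Let Γ act without inversion on a tree 𝒯 and let e ∈ E(𝒯) be an edge such that the smallest subtree of 𝒯 containing all vertices of the orbit Γ·s(e) is all of 𝒯, and the same holds for Γ·r(e). If the quotient graph 𝒯/Γ with the edges (the images of) e and ē removed is still connected, then Γ is isomorphic to an HNN extension HNN(H, Σ, θ) over Σ = Stab(e), where H is the fundamental group of the graph of groups obtained by restricting to the complement of e, and θ : Σ → H is injective. -/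
/-!
Remove from `T` the `Γ`-orbit of the edge `e = ab`, let `H` be the stabilizer of the component of
`a`, and pick `τ` with `τ • b` in that component (possible since `(T/Γ) - e` is connected). Then
`Stab(e)` and `τ Stab(e) τ⁻¹` lie in `H`, so `H` and `τ` define a map
`HNN(H, Stab(e), τ · τ⁻¹) → Γ`.
It is onto: walking through `T` from `a`, every orbit edge crossed is a translate of `e` and costs
one factor `τ^{±1}`. It is injective by ping-pong: every orbit edge separates the tree, and for a
reduced word `h₀ t^ε₁ h₁ ⋯ t^εₙ hₙ` with `n ≥ 1` each letter pushes `a` further across translates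
of `e`, so the image moves `a` to the far side of an edge and is not `1`.
-/

namespace SimpleGraph

variable {V : Type*}

def side (G : SimpleGraph V) (u v : V) : Set V :=
  {x | (G.deleteEdges {s(u, v)}).Reachable u x}

variable {G : SimpleGraph V} {u v u' v' x y : V}

theorem mem_side_self : u ∈ G.side u v := Reachable.refl u

theorem mem_side_of_reachable_deleteEdges {S : Set (Sym2 V)} (he : s(u, v) ∈ S)
    (h : (G.deleteEdges S).Reachable u x) : x ∈ G.side u v :=
  h.mono (deleteEdges_anti (Set.singleton_subset_iff.mpr he))

theorem mem_side_of_adj (hx : x ∈ G.side u v) (hxy : G.Adj x y) (hne : s(x, y) ≠ s(u, v)) :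
    y ∈ G.side u v :=
  Reachable.trans hx ((deleteEdges_adj ..).mpr ⟨hxy, hne⟩).reachable

theorem IsAcyclic.disjoint_side (hG : G.IsAcyclic) (huv : G.Adj u v) :
    Disjoint (G.side u v) (G.side v u) := by
  refine Set.disjoint_left.mpr fun x hu hv => isAcyclic_iff_forall_adj_isBridge.mp hG huv ?_
  have hv' : (G.deleteEdges {s(u, v)}).Reachable v x := by rw [Sym2.eq_swap]; exact hv
  exact Reachable.trans hu hv'.symm

/-- A walk from `u` avoiding `uv` that crossed `u'v'` would pass through `u'`, which lies
beyond `uv`. -/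
theorem IsAcyclic.side_subset_side (hG : G.IsAcyclic) (huv : G.Adj u v)
    (hu : u ∈ G.side u' v') (hu' : u' ∈ G.side v u) : G.side u v ⊆ G.side u' v' := by
  classical
  intro x hx
  obtain ⟨p, hp⟩ := reachable_deleteEdges_iff_exists_walk.mp hx
  by_cases he : s(u', v') ∈ p.edges
  · have hmem := p.fst_mem_support_of_mem_edges he
    have hu'' : u' ∈ G.side u v := reachable_deleteEdges_iff_exists_walk.mpr
      ⟨p.takeUntil u' hmem, fun h => hp (p.edges_takeUntil_subset_edges hmem h)⟩
    exact absurd hu' (Set.disjoint_left.mp (hG.disjoint_side huv) hu'')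
  · exact Reachable.trans hu (reachable_deleteEdges_iff_exists_walk.mpr ⟨p, he⟩)

section Action

variable {Γ : Type*} [Group Γ] [MulAction Γ V]

theorem Reachable.smul (hG : ∀ (γ : Γ) (u v : V), G.Adj u v → G.Adj (γ • u) (γ • v)) (γ : Γ)
    (h : G.Reachable x y) : G.Reachable (γ • x) (γ • y) :=
  h.map ⟨(γ • ·), hG γ _ _⟩

def reachableStabilizer (G : SimpleGraph V)
    (hG : ∀ (γ : Γ) (u v : V), G.Adj u v → G.Adj (γ • u) (γ • v)) (a : V) : Subgroup Γ where
  carrier := {γ | G.Reachable (γ • a) a}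
  one_mem' := by simp only [Set.mem_ofPred_eq, one_smul, Reachable.refl]
  mul_mem' {γ δ} hγ hδ := by
    simp only [Set.mem_ofPred_eq, mul_smul] at *
    exact (hδ.smul hG γ).trans hγ
  inv_mem' {γ} hγ := by
    simpa only [Set.mem_ofPred_eq, inv_smul_smul] using hγ.symm.smul hG γ⁻¹

theorem mem_reachableStabilizer {hG : ∀ (γ : Γ) (u v : V), G.Adj u v → G.Adj (γ • u) (γ • v)}
    {a : V} {γ : Γ} : γ ∈ G.reachableStabilizer hG a ↔ G.Reachable (γ • a) a := Iff.rfl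

variable {T : SimpleGraph V} (hact : ∀ (γ : Γ) (u v : V), T.Adj u v → T.Adj (γ • u) (γ • v))
include hact

theorem smul_mem_side (γ : Γ) (h : x ∈ T.side u v) : γ • x ∈ T.side (γ • u) (γ • v) := by
  refine h.map ⟨(γ • ·), fun {y z} hyz => ?_⟩
  rw [deleteEdges_adj] at hyz ⊢
  refine ⟨hact γ y z hyz.1, fun he => hyz.2 ?_⟩
  exact Sym2.map.injective (MulAction.injective γ) he

end Action

end SimpleGraph

section EdgeOrbit

variable {V Γ : Type*} [Group Γ] [MulAction Γ V]

variable (Γ) in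
def edgeOrbit (a b : V) : Set (Sym2 V) :=
  Set.range fun γ : Γ => s(γ • a, γ • b)

variable {a b u v : V}

theorem mem_edgeOrbit_iff :
    s(u, v) ∈ edgeOrbit Γ a b ↔ ∃ δ : Γ, (u = δ • a ∧ v = δ • b) ∨ (u = δ • b ∧ v = δ • a) := by
  simp only [edgeOrbit, Set.mem_range, Sym2.eq_iff, eq_comm]

theorem mk_smul_mem_edgeOrbit_iff (γ : Γ) :
    s(γ • u, γ • v) ∈ edgeOrbit Γ a b ↔ s(u, v) ∈ edgeOrbit Γ a b := by
  have key : ∀ (γ : Γ) {u v : V}, s(u, v) ∈ edgeOrbit Γ a b → s(γ • u, γ • v) ∈ edgeOrbit Γ a b :=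
    fun γ _ _ ⟨δ, hδ⟩ => ⟨γ * δ, by simp only [mul_smul, ← Sym2.map_mk, hδ]⟩
  exact ⟨fun h => by simpa only [inv_smul_smul] using key γ⁻¹ h, key γ⟩

variable {T : SimpleGraph V} (hact : ∀ (γ : Γ) (u v : V), T.Adj u v → T.Adj (γ • u) (γ • v))
include hact

theorem deleteEdges_edgeOrbit_adj_smul (γ : Γ) (u v : V)
    (h : (T.deleteEdges (edgeOrbit Γ a b)).Adj u v) :
    (T.deleteEdges (edgeOrbit Γ a b)).Adj (γ • u) (γ • v) := by
  rw [SimpleGraph.deleteEdges_adj] at h ⊢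
  exact ⟨hact γ u v h.1, (mk_smul_mem_edgeOrbit_iff γ).not.mpr h.2⟩

theorem adj_of_mem_edgeOrbit (hab : T.Adj a b) (h : s(u, v) ∈ edgeOrbit Γ a b) : T.Adj u v := by
  obtain ⟨δ, ⟨rfl, rfl⟩ | ⟨rfl, rfl⟩⟩ := mem_edgeOrbit_iff.mp h
  · exact hact δ a b hab
  · exact (hact δ a b hab).symm

variable (hT : T.IsAcyclic) (hab : T.Adj a b)
include hT hab

theorem not_reachable_of_mem_edgeOrbit (h : s(u, v) ∈ edgeOrbit Γ a b) :
    ¬ (T.deleteEdges (edgeOrbit Γ a b)).Reachable u v := fun hr =>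
  Set.disjoint_left.mp (hT.disjoint_side (adj_of_mem_edgeOrbit hact hab h))
    (SimpleGraph.mem_side_of_reachable_deleteEdges h hr) SimpleGraph.mem_side_self

/-- `u'v'` cannot be `vu`: the endpoints of an orbit edge lie in different components of `T` minus
the orbit. -/
theorem side_subset_side_of_mem_edgeOrbit {u' v' : V} (huv : s(u, v) ∈ edgeOrbit Γ a b)
    (hu'v' : s(u', v') ∈ edgeOrbit Γ a b) (hr : (T.deleteEdges (edgeOrbit Γ a b)).Reachable u u')
    (hne : (u, v) ≠ (u', v')) : T.side v u ⊆ T.side u' v' := by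
  have huv' := adj_of_mem_edgeOrbit hact hab huv
  refine hT.side_subset_side huv'.symm ?_ (SimpleGraph.mem_side_of_reachable_deleteEdges huv hr)
  refine SimpleGraph.mem_side_of_adj
    (SimpleGraph.mem_side_of_reachable_deleteEdges hu'v' hr.symm) huv' ?_
  rw [Ne, Sym2.eq_iff]
  rintro (⟨rfl, rfl⟩ | ⟨rfl, rfl⟩)
  · exact hne rfl
  · exact not_reachable_of_mem_edgeOrbit hact hT hab hu'v' hr.symm

end EdgeOrbit

theorem HNNExtension.injective_of_forall_reducedWord {G M : Type*} [Group G] [Group M]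
    {A B : Subgroup G} {φ : A ≃* B} (f : HNNExtension G A B φ →* M)
    (hof : Function.Injective (f.comp HNNExtension.of))
    (hw : ∀ w : HNNExtension.NormalWord.ReducedWord G A B, w.toList ≠ [] → f (w.prod φ) ≠ 1) :
    Function.Injective f := by
  refine (injective_iff_map_eq_one f).mpr fun k hk => ?_
  obtain ⟨d⟩ := HNNExtension.NormalWord.TransversalPair.nonempty G A B
  set w := HNNExtension.NormalWord.equiv φ d k
  have hwk : w.prod φ = k := (HNNExtension.NormalWord.equiv φ d).symm_apply_apply k
  by_cases hl : w.toList = []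
  · have hk' : k = HNNExtension.of w.head := by
      rw [← hwk]
      simp [HNNExtension.NormalWord.ReducedWord.prod, hl]
    rw [hk'] at hk ⊢
    rw [hof (show f.comp HNNExtension.of w.head = f.comp HNNExtension.of 1 by simpa using hk),
      map_one]
  · exact absurd (hwk ▸ hk) (hw _ hl)

def wordProd {Γ : Type*} [Group Γ] {H : Subgroup Γ} (τ : Γ) (l : List (ℤˣ × H)) : Γ :=
  (l.map fun p => τ ^ (p.1 : ℤ) * (p.2 : Γ)).prod

theorem wordProd_cons {Γ : Type*} [Group Γ] {H : Subgroup Γ} (τ : Γ) (ε : ℤˣ) (h : H)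
    (l : List (ℤˣ × H)) : wordProd τ ((ε, h) :: l) = τ ^ (ε : ℤ) * h * wordProd τ l :=
  List.prod_cons

namespace Subgroup

variable {Γ : Type*} [Group Γ] {H S : Subgroup Γ} (τ : Γ) (hS : S ≤ H)
  (hτS : S.map (MulAut.conj τ).toMonoidHom ≤ H)

noncomputable def conjSubgroupOfEquiv :
    S.subgroupOf H ≃* (S.map (MulAut.conj τ).toMonoidHom).subgroupOf H :=
  (subgroupOfEquivOfLe hS).trans
    ((S.equivMapOfInjective _ (MulAut.conj τ).injective).trans (subgroupOfEquivOfLe hτS).symm)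

@[simp]
theorem coe_conjSubgroupOfEquiv_apply (x : S.subgroupOf H) :
    ((conjSubgroupOfEquiv τ hS hτS x : H) : Γ) = τ * x * τ⁻¹ :=
  rfl

noncomputable def hnnLift : HNNExtension H (S.subgroupOf H) _ (conjSubgroupOfEquiv τ hS hτS) →* Γ :=
  HNNExtension.lift H.subtype τ fun x => by
    show τ * ((x : H) : Γ) = ((conjSubgroupOfEquiv τ hS hτS x : H) : Γ) * τ
    rw [coe_conjSubgroupOfEquiv_apply, inv_mul_cancel_right]

@[simp]
theorem hnnLift_of (x : H) : hnnLift τ hS hτS (HNNExtension.of x) = x :=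
  HNNExtension.lift_of _ _ _ x

@[simp]
theorem hnnLift_t : hnnLift τ hS hτS HNNExtension.t = τ :=
  HNNExtension.lift_t _ _ _

theorem hnnLift_reducedWord_prod
    (w : HNNExtension.NormalWord.ReducedWord H (S.subgroupOf H) _) :
    hnnLift τ hS hτS (w.prod (conjSubgroupOfEquiv τ hS hτS)) = w.head * wordProd τ w.toList := by
  rw [HNNExtension.NormalWord.ReducedWord.prod, map_mul, map_list_prod, List.map_map, hnnLift_of]
  exact congrArg (_ * List.prod ·) (List.map_congr_left fun p _ => by
    rw [Function.comp_apply, map_mul, map_zpow, hnnLift_t, hnnLift_of])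

end Subgroup

section HNNDecomposition

open SimpleGraph

variable {V Γ : Type*} [Group Γ] [MulAction Γ V] {T : SimpleGraph V}
  (hact : ∀ (γ : Γ) (u v : V), T.Adj u v → T.Adj (γ • u) (γ • v)) {a b : V} {τ : Γ}
  (hτ : (T.deleteEdges (edgeOrbit Γ a b)).Reachable a (τ • b))

local notation "T₀" => T.deleteEdges (edgeOrbit Γ a b)

local notation "H₀" => reachableStabilizer (T.deleteEdges (edgeOrbit Γ a b))
  (deleteEdges_edgeOrbit_adj_smul hact) a

local notation "Σ₀" => MulAction.stabilizer Γ a ⊓ MulAction.stabilizer Γ b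

theorem stabilizer_inf_le_reachableStabilizer : Σ₀ ≤ H₀ := fun γ hγ => by
  rw [mem_reachableStabilizer, (Subgroup.mem_inf.mp hγ).1]

include hτ in
theorem map_conj_stabilizer_inf_le : (Σ₀).map (MulAut.conj τ).toMonoidHom ≤ H₀ := by
  rintro _ ⟨σ, hσ, rfl⟩
  have hσb : σ • b = b := (Subgroup.mem_inf.mp hσ).2
  have hτb : (τ * σ * τ⁻¹) • τ • b = τ • b := by rw [smul_smul, inv_mul_cancel_right, mul_smul, hσb]
  have h := hτ.smul (deleteEdges_edgeOrbit_adj_smul hact) (τ * σ * τ⁻¹)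
  rw [hτb] at h
  exact h.trans hτ.symm

include hτ in
theorem eq_top_of_reachableStabilizer_le (hT : T.Connected) {K : Subgroup Γ} (hHK : H₀ ≤ K)
    (hτK : τ ∈ K) : K = ⊤ := by
  let P : V → Prop := fun x => ∃ γ ∈ K, Reachable T₀ x (γ • a)
  have hPa : ∀ δ : Γ, P (δ • a) ↔ δ ∈ K := by
    refine fun δ => ⟨fun ⟨γ, hγ, hr⟩ => ?_, fun hδ => ⟨δ, hδ, .refl _⟩⟩
    have hγδ : γ⁻¹ * δ ∈ H₀ := by
      simpa only [mem_reachableStabilizer, mul_smul, inv_smul_smul] using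
        hr.smul (deleteEdges_edgeOrbit_adj_smul hact) γ⁻¹
    simpa using mul_mem hγ (hHK hγδ)
  have hPb : ∀ δ : Γ, P (δ • b) ↔ δ ∈ K := by
    intro δ
    have hr : Reachable T₀ ((δ * τ⁻¹) • a) (δ • b) := by
      simpa only [smul_smul, inv_mul_cancel_right] using
        hτ.smul (deleteEdges_edgeOrbit_adj_smul hact) (δ * τ⁻¹)
    rw [← mul_mem_cancel_right (inv_mem hτK), ← hPa]
    exact ⟨fun ⟨γ, hγ, h⟩ => ⟨γ, hγ, hr.trans h⟩, fun ⟨γ, hγ, h⟩ => ⟨γ, hγ, hr.symm.trans h⟩⟩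
  have hstep : ∀ x y, T.Adj x y → P x → P y := by
    rintro x y hxy ⟨γ, hγ, hr⟩
    by_cases he : s(x, y) ∈ edgeOrbit Γ a b
    · obtain ⟨δ, ⟨rfl, rfl⟩ | ⟨rfl, rfl⟩⟩ := mem_edgeOrbit_iff.mp he
      · exact (hPb δ).mpr ((hPa δ).mp ⟨γ, hγ, hr⟩)
      · exact (hPa δ).mpr ((hPb δ).mp ⟨γ, hγ, hr⟩)
    · exact ⟨γ, hγ, ((deleteEdges_adj ..).mpr ⟨hxy, he⟩).reachable.symm.trans hr⟩
  have hP : ∀ x, T.Reachable a x → P x := by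
    intro x hx
    rw [reachable_iff_reflTransGen] at hx
    induction hx with
    | refl => exact ⟨1, one_mem K, by rw [one_smul]⟩
    | tail _ hxy ih => exact hstep _ _ hxy ih
  exact eq_top_iff.mpr fun γ _ => (hPa γ).mp (hP _ (hT.preconnected a (γ • a)))

variable (a b) in
/-- The edges `e = (a, b)` and `τ • ē` attached to the letters `t` and `t⁻¹`, both oriented away
from the component of `a` in `T₀`. -/
def letterEdge (τ : Γ) (ε : ℤˣ) : V × V :=
  if ε = 1 then (a, b) else (τ • b, τ • a)

theorem letterEdge_one : letterEdge a b τ 1 = (a, b) := if_pos rfl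

theorem letterEdge_neg_one : letterEdge a b τ (-1) = (τ • b, τ • a) := if_neg (by decide)

include hτ in
theorem reachable_letterEdge_fst (ε : ℤˣ) : Reachable T₀ a (letterEdge a b τ ε).1 := by
  rcases Int.units_eq_one_or ε with rfl | rfl
  · rw [letterEdge_one]
  · rwa [letterEdge_neg_one]

theorem letterEdge_mem_edgeOrbit (ε : ℤˣ) :
    s((letterEdge a b τ ε).1, (letterEdge a b τ ε).2) ∈ edgeOrbit Γ a b := by
  rcases Int.units_eq_one_or ε with rfl | rfl
  · exact ⟨1, by simp only [one_smul, letterEdge_one]⟩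
  · exact ⟨τ, by rw [letterEdge_neg_one, Sym2.eq_swap]⟩

theorem smul_letterEdge_neg_ne (hab : T.Adj a b)
    (hnoinv : ∀ (γ : Γ) (u v : V), T.Adj u v → ¬(γ • u = v ∧ γ • v = u)) (h : Γ) (ε : ℤˣ) :
    h • letterEdge a b τ (-ε) ≠ letterEdge a b τ ε := by
  rcases Int.units_eq_one_or ε with rfl | rfl
  · rw [letterEdge_one, letterEdge_neg_one, Prod.smul_mk, Ne, Prod.mk.injEq, ← mul_smul, ← mul_smul]
    exact fun ⟨hb, ha⟩ => hnoinv (h * τ) a b hab ⟨ha, hb⟩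
  · rw [neg_neg, letterEdge_one, letterEdge_neg_one, Prod.smul_mk, Ne, Prod.mk.injEq]
    rintro ⟨ha, hb⟩
    refine hnoinv (τ⁻¹ * h) a b hab ⟨?_, ?_⟩
    · rw [mul_smul, ha, inv_smul_smul]
    · rw [mul_smul, hb, inv_smul_smul]

include hact in
theorem zpow_smul_mem_side_letterEdge (ε : ℤˣ) {x : V}
    (hx : x ∈ T.side (letterEdge a b τ ε).1 (letterEdge a b τ ε).2) :
    τ ^ (ε : ℤ) • x ∈ T.side (letterEdge a b τ (-ε)).2 (letterEdge a b τ (-ε)).1 := by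
  rcases Int.units_eq_one_or ε with rfl | rfl
  · rw [letterEdge_one] at hx
    rw [letterEdge_neg_one, Units.val_one, zpow_one]
    exact smul_mem_side hact τ hx
  · rw [letterEdge_neg_one] at hx
    rw [neg_neg, letterEdge_one, Units.val_neg, Units.val_one, zpow_neg, zpow_one]
    simpa only [inv_smul_smul] using smul_mem_side hact τ⁻¹ hx

theorem mem_toSubgroup_of_smul_letterEdge_eq {x : H₀} {ε : ℤˣ}
    (hx : (x : Γ) • letterEdge a b τ ε = letterEdge a b τ ε) :
    x ∈ HNNExtension.toSubgroup ((Σ₀).subgroupOf H₀)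
      (((Σ₀).map (MulAut.conj τ).toMonoidHom).subgroupOf H₀) ε := by
  rcases Int.units_eq_one_or ε with rfl | rfl
  · rw [letterEdge_one, Prod.smul_mk, Prod.mk.injEq] at hx
    rw [HNNExtension.toSubgroup_one, Subgroup.mem_subgroupOf]
    exact Subgroup.mem_inf.mpr hx
  · rw [letterEdge_neg_one, Prod.smul_mk, Prod.mk.injEq, ← mul_smul, ← mul_smul,
      ← inv_smul_eq_iff, ← inv_smul_eq_iff, ← mul_smul, ← mul_smul] at hx
    rw [HNNExtension.toSubgroup_neg_one, Subgroup.mem_subgroupOf]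
    refine ⟨τ⁻¹ * x * τ, Subgroup.mem_inf.mpr
      ⟨by simpa only [MulAction.mem_stabilizer_iff, mul_assoc] using hx.2,
        by simpa only [MulAction.mem_stabilizer_iff, mul_assoc] using hx.1⟩, ?_⟩
    simp [MulAut.conj_apply, mul_assoc]

variable (hT : T.IsAcyclic) (hab : T.Adj a b)
  (hnoinv : ∀ (γ : Γ) (u v : V), T.Adj u v → ¬(γ • u = v ∧ γ • v = u))
include hT hab hnoinv hτ

/-- Ping-pong. The letter `t^ε` cannot undo the next one `t^ε₂`: for `ε₂ = -ε` the chain condition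
forbids `h` to fix the edge, and for `ε₂ = ε` either `h τ` or `τ⁻¹ h` would invert `e`. -/
theorem smul_wordProd_smul_mem_side : ∀ (l : List (ℤˣ × H₀)) (ε : ℤˣ) (h : H₀),
    ((ε, h) :: l).IsChain
      (fun p q => (p.2 : Γ) • letterEdge a b τ p.1 = letterEdge a b τ p.1 → p.1 = q.1) →
    (h : Γ) • wordProd τ l • a ∈ T.side (letterEdge a b τ ε).1 (letterEdge a b τ ε).2
  | [], ε, h, _ => by
    rw [wordProd, List.map_nil, List.prod_nil, one_smul]
    exact mem_side_of_reachable_deleteEdges (letterEdge_mem_edgeOrbit ε)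
      ((reachable_letterEdge_fst hτ ε).symm.trans h.2.symm)
  | (ε₂, h₂) :: l, ε, h, hchain => by
    have hfar := smul_mem_side hact h (zpow_smul_mem_side_letterEdge hact ε₂
      (smul_wordProd_smul_mem_side l ε₂ h₂ (List.IsChain.tail hchain)))
    have hne : h • letterEdge a b τ (-ε₂) ≠ letterEdge a b τ ε := by
      rcases eq_or_ne ε₂ ε with rfl | hεε₂
      · exact smul_letterEdge_neg_ne hab hnoinv _ _
      · rw [Int.units_ne_iff_eq_neg.mp hεε₂, neg_neg]
        exact fun hfix => hεε₂ ((List.isChain_cons_cons.mp hchain).1 hfix).symm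
    refine side_subset_side_of_mem_edgeOrbit hact hT hab
      ((mk_smul_mem_edgeOrbit_iff _).mpr (letterEdge_mem_edgeOrbit _)) (letterEdge_mem_edgeOrbit ε)
      (((reachable_letterEdge_fst hτ _).smul (deleteEdges_edgeOrbit_adj_smul hact) h).symm.trans
        (h.2.trans (reachable_letterEdge_fst hτ ε))) hne ?_
    simpa only [wordProd_cons, mul_smul] using hfar

theorem mul_wordProd_ne_one (h₀ : H₀) (ε : ℤˣ) (h : H₀) (l : List (ℤˣ × H₀))
    (hchain : ((ε, h) :: l).IsChain
      (fun p q => (p.2 : Γ) • letterEdge a b τ p.1 = letterEdge a b τ p.1 → p.1 = q.1)) :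
    (h₀ : Γ) * wordProd τ ((ε, h) :: l) ≠ 1 := by
  intro h1
  have hfar := zpow_smul_mem_side_letterEdge hact ε
    (smul_wordProd_smul_mem_side hact hτ hT hab hnoinv l ε h hchain)
  have hback : τ ^ (ε : ℤ) • (h : Γ) • wordProd τ l • a = (h₀ : Γ)⁻¹ • a := by
    rw [← mul_smul, ← mul_smul, ← wordProd_cons, eq_inv_of_mul_eq_one_right h1]
  rw [hback] at hfar
  have hnear : (h₀ : Γ)⁻¹ • a ∈ T.side (letterEdge a b τ (-ε)).1 (letterEdge a b τ (-ε)).2 :=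
    mem_side_of_reachable_deleteEdges (letterEdge_mem_edgeOrbit _)
      ((reachable_letterEdge_fst hτ _).symm.trans (inv_mem h₀.2).symm)
  exact Set.disjoint_left.mp
    (hT.disjoint_side (adj_of_mem_edgeOrbit hact hab (letterEdge_mem_edgeOrbit _))) hnear hfar

theorem hnnLift_injective : Function.Injective (Subgroup.hnnLift τ
    (stabilizer_inf_le_reachableStabilizer hact) (map_conj_stabilizer_inf_le hact hτ)) := by
  refine HNNExtension.injective_of_forall_reducedWord _ (fun x y hxy => ?_) ?_
  · exact Subtype.ext (by simpa only [MonoidHom.comp_apply, Subgroup.hnnLift_of] using hxy)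
  · rintro ⟨h₀, _ | ⟨⟨ε, h⟩, l⟩, hchain⟩ hne
    · exact absurd rfl hne
    · rw [Subgroup.hnnLift_reducedWord_prod]
      exact mul_wordProd_ne_one hact hτ hT hab hnoinv h₀ ε h l
        (hchain.imp fun p q hpq hfix => hpq (mem_toSubgroup_of_smul_letterEdge_eq hact hfix))

end HNNDecomposition

theorem hnn_decomposition_of_quotient_minus_edge_connected_general
    {V Γ : Type*} [Group Γ] [MulAction Γ V]
    (T : SimpleGraph V) (hT : T.IsTree)
    (hact : ∀ (γ : Γ) (u v : V), T.Adj u v → T.Adj (γ • u) (γ • v))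
    (hnoinv : ∀ (γ : Γ) (u v : V), T.Adj u v → ¬(γ • u = v ∧ γ • v = u))
    (a b : V) (hab : T.Adj a b)
    (hconn : ∀ u v : V, ∃ (γ : Γ) (w : T.Walk u (γ • v)),
      ∀ d ∈ w.darts, ¬ ∃ δ : Γ,
        (d.toProd.1 = δ • a ∧ d.toProd.2 = δ • b) ∨
        (d.toProd.1 = δ • b ∧ d.toProd.2 = δ • a)) :
    ∃ (H : Subgroup Γ) (A B : Subgroup H) (φ : A ≃* B)
      (ψ : HNNExtension H A B φ ≃* Γ),
      (∀ x : H, ψ (HNNExtension.of x) = (x : Γ)) ∧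
      Subgroup.map H.subtype A =
        MulAction.stabilizer Γ a ⊓ MulAction.stabilizer Γ b := by
  obtain ⟨τ, w, hw⟩ := hconn a b
  have hτ : (T.deleteEdges (edgeOrbit Γ a b)).Reachable a (τ • b) := by
    refine (w.toDeleteEdges _ fun e he => ?_).reachable
    obtain ⟨d, hd, rfl⟩ := List.mem_map.mp he
    exact fun h => hw d hd (mem_edgeOrbit_iff.mp h)
  have hS := stabilizer_inf_le_reachableStabilizer (a := a) (b := b) hact
  have hτS := map_conj_stabilizer_inf_le hact hτ
  have hsurj : Function.Surjective (Subgroup.hnnLift τ hS hτS) :=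
    MonoidHom.range_eq_top.mp <| eq_top_of_reachableStabilizer_le hact hτ hT.connected
      (fun γ hγ => ⟨HNNExtension.of ⟨γ, hγ⟩, Subgroup.hnnLift_of τ hS hτS _⟩)
      ⟨HNNExtension.t, Subgroup.hnnLift_t τ hS hτS⟩
  refine ⟨_, _, _, _, MulEquiv.ofBijective _
    ⟨hnnLift_injective hact hτ hT.isAcyclic hab hnoinv, hsurj⟩, Subgroup.hnnLift_of τ hS hτS, ?_⟩
  rw [Subgroup.subgroupOf_map_subtype, inf_eq_left.mpr hS]

/-- **Dévissage, HNN case.**  Let `Γ` act (by automorphisms, without inversion) on a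
tree `T`, and let `e` be an edge with endpoints `a, b` such that the smallest subtree
containing the orbit `Γ·a` is all of `T` (every vertex lies on a path between two
points of `Γ·a`), and similarly for `Γ·b`.  If the quotient graph `T/Γ` minus the
edges `e, ē` is still connected (any two vertices of `T` are joined, up to translating
the second by `Γ`, by a path avoiding the orbit of the edge `e`), then `Γ` is
isomorphic to an HNN extension `HNN(H, Σ, θ)` over `Σ = Stab(e)`: there are a subgroup
`H ≤ Γ` (the fundamental group of the graph of groups restricted to the complement of
`e`), subgroups `A, B ≤ H` with an isomorphism `φ : A ≃* B` (the injective `θ`), and an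
isomorphism `ψ : HNNExtension H A B φ ≃* Γ` restricting to the identity on `H`, with
`A` equal, as a subgroup of `Γ`, to the stabilizer `Stab(e)` (the action being without
inversion, `Stab(e)` consists of the `γ` fixing both endpoints `a` and `b`). -/
theorem hnn_decomposition_of_quotient_minus_edge_connected
    {V Γ : Type*} [Group Γ] [MulAction Γ V]
    (T : SimpleGraph V) (hT : T.IsTree)
    (hact : ∀ (γ : Γ) (u v : V), T.Adj u v → T.Adj (γ • u) (γ • v))
    (hnoinv : ∀ (γ : Γ) (u v : V), T.Adj u v → ¬(γ • u = v ∧ γ • v = u))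
    (a b : V) (hab : T.Adj a b)
    (hspan_a : ∀ x : V, ∃ (γ₁ γ₂ : Γ) (w : T.Walk (γ₁ • a) (γ₂ • a)),
      w.IsPath ∧ x ∈ w.support)
    (hspan_b : ∀ x : V, ∃ (γ₁ γ₂ : Γ) (w : T.Walk (γ₁ • b) (γ₂ • b)),
      w.IsPath ∧ x ∈ w.support)
    (hconn : ∀ u v : V, ∃ (γ : Γ) (w : T.Walk u (γ • v)),
      ∀ d ∈ w.darts, ¬ ∃ δ : Γ,
        (d.toProd.1 = δ • a ∧ d.toProd.2 = δ • b) ∨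
        (d.toProd.1 = δ • b ∧ d.toProd.2 = δ • a)) :
    ∃ (H : Subgroup Γ) (A B : Subgroup H) (φ : A ≃* B)
      (ψ : HNNExtension H A B φ ≃* Γ),
      (∀ x : H, ψ (HNNExtension.of x) = (x : Γ)) ∧
      Subgroup.map H.subtype A =
        MulAction.stabilizer Γ a ⊓ MulAction.stabilizer Γ b :=
  hnn_decomposition_of_quotient_minus_edge_connected_general T hT hact hnoinv a b hab hconn
end

section
/- Let Γ = HNN(H, Σ, θ), let ε, ε′ ∈ {−1, 1}, g′ ∈ H t^{ε} and h′ ∈ t^{ε′} H, and let g, h ∈ Γ with reduced expressions g = x₀ t^{ε₁} ⋯ t^{εₙ} xₙ and h = y₀ t^{η₁} ⋯ t^{ηₘ} yₘ of lengths n, m ≥ K+1, where K ≥ 2, g′ = x₀ t^{ε₁} is the first letter of g and h′ = t^{ηₘ} yₘ is the last letter of h. Define g_i = x_{n−i} t^{ε_{n−i+1}} ⋯ t^{εₙ} xₙ, h_j = y₀ t^{η₁} y₁ ⋯ t^{η_j} y_j (with g₀ = h₀ = e), and W = ⋃_{i+j ≤ K} g g_i⁻¹ Σ_{ε_{n−i}}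 h_j⁻¹ h. Then for every r ∈ Γ with |r| ≤ K: if the element g r h admits no reduced expression beginning with g′ and ending with h′ (i.e. beginning with g′σ for some σ ∈ Σ_ε and ending with σ′h′ for some σ′ ∈ Σ_{−ε′}), then g r h ∈ W. -/
/-!
Write elements of the HNN extension as syllable words
`(x₀ t^{ε₁}) (x₁ t^{ε₂}) ⋯ (x_{k-1} t^{ε_k}) · a`. Right multiplication by `t^η` either cancels
the last syllable (when `a ∈ Σ_{ε_k}` and `η = -ε_k`) or appends the syllable `a t^η`.
Multiplying `g` by the `≤ K` letters of `r` therefore leaves the first `k` syllables of `g`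
followed by some syllables `U`, with `(n - k) + |U| ≤ K < n`, so `k ≥ 1`. Multiplying on by the
letters of `h`, each cancellation consumes one syllable of `U` and one letter of `h`. If `U` is
used up and the trailing element lies in `Σ_{ε_k}`, then `g r h_j ∈ g g_i⁻¹ Σ_{ε_{n-i}}` with
`i = n - k` and `j = |U|`. Otherwise, from the first letter of `h` that does not cancel on, the
rest of `h` is appended without cancellation, which gives a reduced expression of `g r h`
beginning with the first letter of `g` and ending with the last letter of `h`.
-/

open HNNExtension NormalWord

/-- `prefixProd φ w k` is the element `x₀ t^{ε₁} x₁ ⋯ t^{ε_k} x_k` of the HNN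
extension: the product of the head of the word `w` with its first `k` `t`-letters.
In particular `prefixProd φ w 0 = of w.head` and `prefixProd φ w w.toList.length`
is `w.prod φ`. -/
def prefixProd {G : Type*} [Group G] {A B : Subgroup G} (φ : A ≃* B)
    (w : HNNExtension.NormalWord.ReducedWord G A B) (k : ℕ) : HNNExtension G A B φ :=
  of w.head * ((w.toList.take k).map (fun x => t ^ (x.1 : ℤ) * of x.2)).prod

theorem List.exists_take_append_eq_append_singleton {α : Type*} (S U : List α) {k : ℕ}
    (hk0 : 0 < k) (hk : k ≤ S.length) :
    ∃ k' U' q, k' ≤ k ∧ S.take k ++ U = S.take k' ++ U' ++ [q] ∧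
      S.length - k' + U'.length ≤ S.length - k + U.length + 1 := by
  rcases U.eq_nil_or_concat with rfl | ⟨V, q, rfl⟩
  · refine ⟨k - 1, [], S[k - 1], by omega, ?_, by simp; omega⟩
    rw [List.append_nil, List.append_nil, List.take_concat_get', Nat.sub_add_cancel hk0]
  · exact ⟨k, V, q, le_rfl, by simp, by simp; omega⟩

namespace HNNExtension

section Syllables

variable {G : Type*}

def syllables : G → List (ℤˣ × G) → List (G × ℤˣ)
  | _, [] => []
  | x, (u, y) :: L => (x, u) :: syllables y L

def lastLetter : G → List (ℤˣ × G) → G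
  | x, [] => x
  | _, (_, y) :: L => lastLetter y L

@[simp] theorem length_syllables (x : G) (L : List (ℤˣ × G)) :
    (syllables x L).length = L.length := by
  induction L generalizing x with
  | nil => rfl
  | cons p L ih => simp [syllables, ih]

theorem getElem_syllables_snd (x : G) (L : List (ℤˣ × G)) {k : ℕ}
    (hk : k < (syllables x L).length) :
    (syllables x L)[k].2 = (L[k]'(by simpa using hk)).1 := by
  induction L generalizing x k with
  | nil => simp at hk
  | cons p L ih =>
    rcases k with _ | k
    · simp [syllables]
    · simp [syllables, ih]

theorem head_syllables (x : G) (L : List (ℤˣ × G)) (h : syllables x L ≠ []) :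
    (syllables x L).head h = (x, (L.head (by rintro rfl; exact h rfl)).1) := by
  rcases L with _ | ⟨p, L⟩
  · exact absurd rfl h
  · rfl

theorem exists_syllables_eq (x : G) (u : ℤˣ) (S : List (G × ℤˣ)) (b : G) :
    ∃ L : List (ℤˣ × G), syllables x L = (x, u) :: S ∧ lastLetter x L = b ∧
      L.getLast? = some ((((x, u) :: S).getLast (List.cons_ne_nil _ _)).2, b) := by
  induction S generalizing x u with
  | nil => exact ⟨[(u, b)], rfl, rfl, rfl⟩
  | cons q S ih =>
    obtain ⟨L, hL, hb, hlast⟩ := ih q.1 q.2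
    refine ⟨(u, q.1) :: L, by simp [syllables, hL], by simp [lastLetter, hb], ?_⟩
    rw [List.getLast?_cons, hlast, List.getLast_cons (List.cons_ne_nil _ _)]
    rfl

theorem getLast_take_syllables_snd (x : G) (L : List (ℤˣ × G)) {k : ℕ} (hk : k < L.length)
    (h : (syllables x L).take (k + 1) ≠ []) :
    (((syllables x L).take (k + 1)).getLast h).2 = L[k].1 := by
  rw [List.getLast_take]
  simp [getElem_syllables_snd, hk]

end Syllables

variable {G : Type*} [Group G] {A B : Subgroup G} (φ : A ≃* B)

theorem of_toSubgroupEquiv (u : ℤˣ) (a : toSubgroup A B u) :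
    (of (toSubgroupEquiv φ u a : G) : HNNExtension G A B φ) =
      t ^ (u : ℤ) * of (a : G) * t ^ (-(u : ℤ)) := by
  rcases Int.units_eq_one_or u with rfl | rfl
  · exact equiv_eq_conj a
  · simp only [Units.val_neg, Units.val_one, zpow_neg, zpow_one, neg_neg]
    exact equiv_symm_eq_conj a

def letterProd (L : List (ℤˣ × G)) : HNNExtension G A B φ :=
  (L.map fun p => t ^ (p.1 : ℤ) * of p.2).prod

/-- Right multiplication by `t ^ η` only removes or appends a syllable `of g * t ^ u`, whereas
on the letters `t ^ u * of g` of a `ReducedWord` it would also change the last letter. -/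
def syllableProd (S : List (G × ℤˣ)) : HNNExtension G A B φ :=
  (S.map fun p => of p.1 * t ^ (p.2 : ℤ)).prod

variable (A B) in
abbrev LettersReduced (L : List (ℤˣ × G)) : Prop :=
  L.IsChain fun p q => p.2 ∈ toSubgroup A B p.1 → p.1 = q.1

variable (A B) in
abbrev SyllablesReduced (S : List (G × ℤˣ)) : Prop :=
  S.IsChain fun p q => q.1 ∈ toSubgroup A B p.2 → p.2 = q.2

@[simp] theorem letterProd_nil : letterProd φ [] = 1 := rfl

@[simp] theorem letterProd_cons (p : ℤˣ × G) (L : List (ℤˣ × G)) :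
    letterProd φ (p :: L) = t ^ (p.1 : ℤ) * of p.2 * letterProd φ L := by
  simp [letterProd]

@[simp] theorem letterProd_append (L M : List (ℤˣ × G)) :
    letterProd φ (L ++ M) = letterProd φ L * letterProd φ M := by
  simp [letterProd]

@[simp] theorem syllableProd_nil : syllableProd φ [] = 1 := rfl

@[simp] theorem syllableProd_cons (p : G × ℤˣ) (S : List (G × ℤˣ)) :
    syllableProd φ (p :: S) = of p.1 * t ^ (p.2 : ℤ) * syllableProd φ S := by
  simp [syllableProd]

@[simp] theorem syllableProd_append (S T : List (G × ℤˣ)) :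
    syllableProd φ (S ++ T) = syllableProd φ S * syllableProd φ T := by
  simp [syllableProd]

theorem NormalWord.ReducedWord.prod_eq_letterProd (w : ReducedWord G A B) :
    w.prod φ = of w.head * letterProd φ w.toList := rfl

theorem prefixProd_eq_letterProd (w : ReducedWord G A B) (k : ℕ) :
    prefixProd φ w k = of w.head * letterProd φ (w.toList.take k) := rfl

theorem prefixProd_length (w : ReducedWord G A B) :
    prefixProd φ w w.toList.length = w.prod φ := by
  rw [prefixProd_eq_letterProd, List.take_length]
  rfl

theorem exists_reducedWord_of_lettersReduced {M : List (ℤˣ × G)} (hM : LettersReduced A B M)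
    (x : G) {u : ℤˣ} (hhead : M.head?.map Prod.fst = some u) {T : List (ℤˣ × G)} (hT : T ≠ [])
    (hlast : M.getLast? = T.getLast?) :
    ∃ (w : ReducedWord G A B) (hne : w.toList ≠ []), w.prod φ = of x * letterProd φ M ∧
      w.head = x ∧ (w.toList.head hne).1 = u ∧ w.toList.getLast hne = T.getLast hT := by
  have hMne : M ≠ [] := by rintro rfl; simp at hhead
  rw [List.head?_eq_some_head hMne] at hhead
  rw [List.getLast?_eq_some_getLast hMne, List.getLast?_eq_some_getLast hT] at hlast
  exact ⟨⟨x, M, hM⟩, hMne, rfl, rfl, by simpa using hhead, Option.some.inj hlast⟩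

theorem of_mul_letterProd (x : G) (L : List (ℤˣ × G)) :
    of x * letterProd φ L = syllableProd φ (syllables x L) * of (lastLetter x L) := by
  induction L generalizing x with
  | nil => simp [syllables, lastLetter]
  | cons p L ih => simp [syllables, lastLetter, ← ih, mul_assoc]

theorem syllableProd_take_syllables (x : G) (L : List (ℤˣ × G)) {k : ℕ} (hk : k < L.length) :
    syllableProd φ ((syllables x L).take (k + 1)) =
      of x * letterProd φ (L.take (k + 1)) * (of L[k].2)⁻¹ := by
  induction L generalizing x k with
  | nil => simp at hk
  | cons p L ih =>
    rcases k with _ | k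
    · simp [syllables, mul_assoc]
    · simp [syllables, mul_assoc, ih _ (by simpa using hk)]

theorem syllablesReduced_syllables_iff (x : G) (L : List (ℤˣ × G)) :
    SyllablesReduced A B (syllables x L) ↔ LettersReduced A B L := by
  induction L generalizing x with
  | nil => simp [syllables]
  | cons p L ih =>
    rcases L with _ | ⟨q, L⟩
    · simp [syllables]
    · simp only [syllables, List.isChain_cons_cons]
      exact and_congr Iff.rfl (ih p.2)

theorem syllableProd_concat_mul_of_mul_t_zpow_neg (S : List (G × ℤˣ)) (x : G) (v : ℤˣ)
    {a : G} (ha : a ∈ toSubgroup A B v) :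
    syllableProd φ (S ++ [(x, v)]) * of a * t ^ (-(v : ℤ)) =
      syllableProd φ S * of (x * toSubgroupEquiv φ v ⟨a, ha⟩) := by
  simp [of_toSubgroupEquiv, mul_assoc]

theorem SyllablesReduced.concat_of_not_cancel {S : List (G × ℤˣ)} {x a : G} {v η : ℤˣ}
    (hS : SyllablesReduced A B (S ++ [(x, v)])) (h : ¬ (a ∈ toSubgroup A B v ∧ η = -v)) :
    SyllablesReduced A B (S ++ [(x, v), (a, η)]) := by
  refine List.isChain_append_cons_cons.mpr ⟨hS, fun ha => ?_, List.isChain_singleton _⟩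
  by_contra hne
  exact h ⟨ha, (neg_eq_iff_eq_neg.mpr (Int.units_ne_iff_eq_neg.mp hne)).symm⟩

theorem exists_syllablesReduced_take_append_eq_mul {S : List (G × ℤˣ)}
    (hS : SyllablesReduced A B S) (a : G) (L : List (ℤˣ × G)) (hL : L.length < S.length) :
    ∃ k U b, k ≤ S.length ∧ S.length - k + U.length ≤ L.length ∧
      SyllablesReduced A B (S.take k ++ U) ∧
      syllableProd φ S * of a * letterProd φ L = syllableProd φ (S.take k ++ U) * of b := by
  induction L using List.reverseRecOn with
  | nil => exact ⟨S.length, [], a, le_rfl, by simp, by simpa using hS, by simp⟩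
  | append_singleton L p ih =>
    obtain ⟨ζ, z⟩ := p
    rw [List.length_append, List.length_singleton] at hL
    obtain ⟨k, U, b, hkS, hbud, hred, hval⟩ := ih (by omega)
    obtain ⟨k', U', ⟨x, v⟩, hk', hsplit, hbud'⟩ :=
      List.exists_take_append_eq_append_singleton S U (k := k) (by omega) hkS
    rw [hsplit] at hred
    have hval' : syllableProd φ S * of a * letterProd φ (L ++ [(ζ, z)]) =
        syllableProd φ (S.take k' ++ U' ++ [(x, v)]) * of b * t ^ (ζ : ℤ) * of z := by
      simp only [letterProd_append, letterProd_cons, letterProd_nil, mul_one, ← mul_assoc, hval,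
        hsplit]
    by_cases hcancel : b ∈ toSubgroup A B v ∧ ζ = -v
    · obtain ⟨hb, rfl⟩ := hcancel
      refine ⟨k', U', x * toSubgroupEquiv φ v ⟨b, hb⟩ * z, by omega, by simp; omega,
        hred.left_of_append, ?_⟩
      rw [hval', Units.val_neg, syllableProd_concat_mul_of_mul_t_zpow_neg (ha := hb)]
      simp [mul_assoc]
    · refine ⟨k, U ++ [(b, ζ)], z, hkS, by simp; omega, ?_, ?_⟩
      · rw [← List.append_assoc, hsplit]
        simpa using hred.concat_of_not_cancel hcancel
      · rw [hval', ← List.append_assoc, hsplit]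
        simp [mul_assoc]

theorem exists_syllables_take_append_eq_prod_mul (wg wr : ReducedWord G A B)
    (hlen : wr.toList.length < wg.toList.length) :
    ∃ k U b, k < wg.toList.length ∧ wg.toList.length - (k + 1) + U.length ≤ wr.toList.length ∧
      SyllablesReduced A B ((syllables wg.head wg.toList).take (k + 1) ++ U) ∧
      wg.prod φ * wr.prod φ =
        syllableProd φ ((syllables wg.head wg.toList).take (k + 1) ++ U) * of b := by
  obtain ⟨k, U, b, hk, hbud, hred, hval⟩ := exists_syllablesReduced_take_append_eq_mul φ
    ((syllablesReduced_syllables_iff wg.head _).mpr wg.chain)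
    (lastLetter wg.head wg.toList * wr.head) wr.toList (by simpa using hlen)
  simp only [length_syllables] at hk hbud
  obtain ⟨k, rfl⟩ : ∃ k', k = k' + 1 := ⟨k - 1, by omega⟩
  refine ⟨k, U, b, by omega, hbud, hred, ?_⟩
  rw [← hval, wg.prod_eq_letterProd φ, wr.prod_eq_letterProd φ, of_mul_letterProd]
  simp [mul_assoc]

theorem exists_lettersReduced_of_not_cancel {Q : List (G × ℤˣ)} (hQ : Q ≠ [])
    (hQred : SyllablesReduced A B Q) {b y : G} {η : ℤˣ} {T : List (ℤˣ × G)}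
    (hT : LettersReduced A B ((η, y) :: T))
    (hjoin : ¬ (b ∈ toSubgroup A B (Q.getLast hQ).2 ∧ η = -(Q.getLast hQ).2)) :
    ∃ M : List (ℤˣ × G), LettersReduced A B M ∧ M.head?.map Prod.fst = some (Q.head hQ).2 ∧
      M.getLast? = ((η, y) :: T).getLast? ∧
      of (Q.head hQ).1 * letterProd φ M = syllableProd φ Q * of b * letterProd φ ((η, y) :: T) := by
  have hred : SyllablesReduced A B (Q ++ [(b, η)]) := by
    rw [← List.dropLast_concat_getLast hQ] at hQred ⊢
    simpa using hQred.concat_of_not_cancel hjoin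
  obtain ⟨⟨x, u⟩, Q, rfl⟩ := List.exists_cons_of_ne_nil hQ
  obtain ⟨L, hsyl, hlast, hget⟩ := exists_syllables_eq x u (Q ++ [(b, η)]) y
  obtain ⟨L, rfl⟩ : ∃ L', L = L' ++ [(η, y)] := List.getLast?_eq_some_iff.mp (by simpa using hget)
  refine ⟨L ++ (η, y) :: T, ?_, ?_, by simp [List.getLast?_cons], ?_⟩
  · exact List.isChain_split.mpr ⟨(syllablesReduced_syllables_iff x _).mp (hsyl ▸ hred), hT⟩
  · rcases L with _ | ⟨⟨u', y'⟩, L⟩ <;> simp only [syllables, List.nil_append,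
      List.cons_append, List.cons.injEq, Prod.mk.injEq] at hsyl <;> simp [hsyl.1.2]
  · calc of x * letterProd φ (L ++ (η, y) :: T)
        = of x * letterProd φ (L ++ [(η, y)]) * letterProd φ T := by simp [mul_assoc]
      _ = syllableProd φ ((x, u) :: Q ++ [(b, η)]) * of y * letterProd φ T := by
        rw [of_mul_letterProd, hsyl, hlast]; rfl
      _ = _ := by simp [mul_assoc]

theorem exists_cancel_or_lettersReduced {F : List (G × ℤˣ)} (hF : F ≠ []) (U : List (G × ℤˣ))
    (b : G) (T : List (ℤˣ × G)) (hred : SyllablesReduced A B (F ++ U))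
    (hT : LettersReduced A B T) (hlen : U.length < T.length) :
    (∃ σ ∈ toSubgroup A B (F.getLast hF).2,
      syllableProd φ (F ++ U) * of b * letterProd φ (T.take U.length) =
        syllableProd φ F * of σ) ∨
    ∃ M : List (ℤˣ × G), LettersReduced A B M ∧ M.head?.map Prod.fst = some (F.head hF).2 ∧
      M.getLast? = T.getLast? ∧
      of (F.head hF).1 * letterProd φ M = syllableProd φ (F ++ U) * of b * letterProd φ T := by
  induction U using List.reverseRecOn generalizing b T with
  | nil =>
    obtain ⟨⟨η, y⟩, T, rfl⟩ := List.exists_cons_of_ne_nil (List.ne_nil_of_length_pos hlen)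
    by_cases hb : b ∈ toSubgroup A B (F.getLast hF).2
    · exact .inl ⟨b, hb, by simp⟩
    · exact .inr (by simpa using
        exists_lettersReduced_of_not_cancel φ hF (by simpa using hred) hT (fun h => hb h.1))
  | append_singleton U p ih =>
    obtain ⟨x, v⟩ := p
    rw [List.length_append, List.length_singleton] at hlen
    obtain ⟨⟨η, y⟩, T, rfl⟩ := List.exists_cons_of_ne_nil
      (List.ne_nil_of_length_pos (show 0 < T.length by omega))
    by_cases hcancel : b ∈ toSubgroup A B v ∧ η = -v
    · obtain ⟨hb, rfl⟩ := hcancel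
      have hstep (T' : List (ℤˣ × G)) :
          syllableProd φ (F ++ (U ++ [(x, v)])) * of b * letterProd φ ((-v, y) :: T') =
            syllableProd φ (F ++ U) * of (x * toSubgroupEquiv φ v ⟨b, hb⟩ * y) *
              letterProd φ T' := by
        calc _ = syllableProd φ (F ++ U ++ [(x, v)]) * of b * t ^ (-(v : ℤ)) * of y *
              letterProd φ T' := by simp [mul_assoc]
          _ = _ := by rw [syllableProd_concat_mul_of_mul_t_zpow_neg (ha := hb)]; simp [mul_assoc]
      have hredU : SyllablesReduced A B (F ++ U) := by
        rw [← List.append_assoc] at hred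
        exact hred.left_of_append
      rcases ih _ T hredU hT.tail (by simp at hlen; omega)
        with ⟨σ, hσ, hval⟩ | ⟨M, hM, hhead, hlast, hval⟩
      · refine .inl ⟨σ, hσ, ?_⟩
        rw [List.length_append, List.length_singleton, List.take_succ_cons, hstep, hval]
      · refine .inr ⟨M, hM, hhead, ?_, by rw [hval, hstep]⟩
        rcases T with _ | ⟨q, T⟩
        · simp at hlen
        · simpa using hlast
    · right
      have := exists_lettersReduced_of_not_cancel φ (Q := F ++ U ++ [(x, v)]) (by simp)
        (by rwa [List.append_assoc]) hT (by simpa using hcancel)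
      simpa [List.append_assoc, List.head_append_left hF] using this

end HNNExtension

theorem mem_W_of_not_begins_ends_general {G : Type*} [Group G] (A B : Subgroup G) (φ : A ≃* B)
    (K : ℕ)
    (wg wh : HNNExtension.NormalWord.ReducedWord G A B)
    (hgne : wg.toList ≠ []) (hhne : wh.toList ≠ [])
    (hn : K + 1 ≤ wg.toList.length) (hm : K + 1 ≤ wh.toList.length)
    (r : HNNExtension G A B φ)
    (hr : ∃ wr : HNNExtension.NormalWord.ReducedWord G A B,
      wr.prod φ = r ∧ wr.toList.length ≤ K)
    (hno : ¬ ∃ (w : HNNExtension.NormalWord.ReducedWord G A B) (hne : w.toList ≠ []),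
      w.prod φ = wg.prod φ * r * wh.prod φ ∧
      (w.toList.head hne).1 = (wg.toList.head hgne).1 ∧
      wg.head⁻¹ * w.head ∈ HNNExtension.toSubgroup A B (-(wg.toList.head hgne).1) ∧
      (w.toList.getLast hne).1 = (wh.toList.getLast hhne).1 ∧
      (w.toList.getLast hne).2 * ((wh.toList.getLast hhne).2)⁻¹ ∈
        HNNExtension.toSubgroup A B ((wh.toList.getLast hhne).1)) :
    ∃ i j : ℕ, i + j ≤ K ∧
      ∃ (hi : wg.toList.length - i - 1 < wg.toList.length) (σ : G),
        σ ∈ HNNExtension.toSubgroup A B (wg.toList.get ⟨wg.toList.length - i - 1, hi⟩).1 ∧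
        wg.prod φ * r * wh.prod φ =
          prefixProd φ wg (wg.toList.length - i) *
            (of (wg.toList.get ⟨wg.toList.length - i - 1, hi⟩).2)⁻¹ *
            of σ * (prefixProd φ wh j)⁻¹ * wh.prod φ := by
  obtain ⟨wr, rfl, hwr⟩ := hr
  obtain ⟨k, U, b, hk, hbud, hred, hgr⟩ :=
    exists_syllables_take_append_eq_prod_mul φ wg wr (by omega)
  have hF : (syllables wg.head wg.toList).take (k + 1) ≠ [] :=
    List.ne_nil_of_length_pos (by simp; omega)
  have hgrh (j : ℕ) : wg.prod φ * wr.prod φ * prefixProd φ wh j =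
      syllableProd φ ((syllables wg.head wg.toList).take (k + 1) ++ U) * of (b * wh.head) *
        letterProd φ (wh.toList.take j) := by
    rw [prefixProd_eq_letterProd, ← mul_assoc, hgr]
    simp [mul_assoc]
  rcases exists_cancel_or_lettersReduced φ hF U (b * wh.head) wh.toList hred wh.chain (by omega)
    with ⟨σ, hσ, hval⟩ | ⟨M, hM, hhead, hlast, hval⟩
  · have hidx : wg.toList.length - (wg.toList.length - (k + 1)) = k + 1 := by omega
    refine ⟨wg.toList.length - (k + 1), U.length, by omega, by omega, σ, ?_, ?_⟩
    · rw [getLast_take_syllables_snd _ _ hk] at hσ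
      simpa [hidx] using hσ
    · simp only [hidx, List.get_eq_getElem, Nat.add_sub_cancel]
      rw [prefixProd_eq_letterProd φ wg, ← syllableProd_take_syllables φ _ _ hk, ← hval, ← hgrh]
      group
  · rw [List.head_take, head_syllables] at hhead hval
    obtain ⟨w, hne, hw, hwhead, hwfst, hwlast⟩ :=
      exists_reducedWord_of_lettersReduced φ hM wg.head hhead hhne hlast
    refine (hno ⟨w, hne, ?_, hwfst, by simp [hwhead], by rw [hwlast], by simp [hwlast]⟩).elim
    rw [hw, hval, ← prefixProd_length φ wh, hgrh, List.take_length]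

/-- **Combinatorial lemma on HNN extensions** (Lemma 4.4 of Fima–Vaes, element case).
Let `Γ = HNN(H, Σ, θ)` (Mathlib: `HNNExtension G A B φ`), let `K ≥ 2` and let `g, h`
have reduced expressions `wg = x₀ t^{ε₁} ⋯ t^{εₙ} xₙ` and `wh = y₀ t^{η₁} ⋯ t^{ηₘ} yₘ`
of lengths `n, m ≥ K + 1`, with first letter `g′ = x₀ t^{ε₁}` of `g` and last letter
`h′ = t^{ηₘ} yₘ` of `h`.  With `gᵢ = x_{n−i} t^{ε_{n−i+1}} ⋯ t^{εₙ} xₙ`,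
`h_j = y₀ t^{η₁} ⋯ t^{η_j} y_j` (so `g gᵢ⁻¹ = prefixProd wg (n−i) · x_{n−i}⁻¹` and
`h_j = prefixProd wh j`), set `W = ⋃_{i+j≤K} g gᵢ⁻¹ Σ_{ε_{n−i}} h_j⁻¹ h`.  Then for
every `r ∈ Γ` of length `|r| ≤ K`: if `g r h` admits no reduced expression beginning
with `g′` and ending with `h′` (i.e. beginning with `g′σ`, `σ ∈ Σ_ε` — equivalently
first exponent `ε₁` and head in `x₀ · Σ_{−ε₁}` — and ending with `σ′h′`,
`σ′ ∈ Σ_{−ε′}` — equivalently last exponent `ηₘ` and last group letter in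
`Σ_{ηₘ} · yₘ`), then `g r h ∈ W`. -/
theorem mem_W_of_not_begins_ends {G : Type*} [Group G] (A B : Subgroup G) (φ : A ≃* B)
    (K : ℕ) (hK : 2 ≤ K)
    (wg wh : HNNExtension.NormalWord.ReducedWord G A B)
    (hgne : wg.toList ≠ []) (hhne : wh.toList ≠ [])
    (hn : K + 1 ≤ wg.toList.length) (hm : K + 1 ≤ wh.toList.length)
    (r : HNNExtension G A B φ)
    (hr : ∃ wr : HNNExtension.NormalWord.ReducedWord G A B,
      wr.prod φ = r ∧ wr.toList.length ≤ K)
    (hno : ¬ ∃ (w : HNNExtension.NormalWord.ReducedWord G A B) (hne : w.toList ≠ []),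
      w.prod φ = wg.prod φ * r * wh.prod φ ∧
      (w.toList.head hne).1 = (wg.toList.head hgne).1 ∧
      wg.head⁻¹ * w.head ∈ HNNExtension.toSubgroup A B (-(wg.toList.head hgne).1) ∧
      (w.toList.getLast hne).1 = (wh.toList.getLast hhne).1 ∧
      (w.toList.getLast hne).2 * ((wh.toList.getLast hhne).2)⁻¹ ∈
        HNNExtension.toSubgroup A B ((wh.toList.getLast hhne).1)) :
    ∃ i j : ℕ, i + j ≤ K ∧
      ∃ (hi : wg.toList.length - i - 1 < wg.toList.length) (σ : G),
        σ ∈ HNNExtension.toSubgroup A B (wg.toList.get ⟨wg.toList.length - i - 1, hi⟩).1 ∧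
        wg.prod φ * r * wh.prod φ =
          prefixProd φ wg (wg.toList.length - i) *
            (of (wg.toList.get ⟨wg.toList.length - i - 1, hi⟩).2)⁻¹ *
            of σ * (prefixProd φ wh j)⁻¹ * wh.prod φ :=
  mem_W_of_not_begins_ends_general A B φ K wg wh hgne hhne hn hm r hr hno
end

section
/- Let G be a countable group acting on a countable set I, and (X₀, μ₀) a standard probability space that has at least one atom and is not concentrated on a single atom. The generalized Bernoulli action G ↷ (X₀, μ₀)^I is essentially free if and only if every g ∈ G − {e} moves infinitely many elements of I. -/
/-!
If `g` moves only finitely many coordinates, every configuration equal to an atom `a` on all of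
them is `g`-fixed, and these configurations form a cylinder of positive measure. If `g` moves
infinitely many coordinates, there are arbitrarily many `i₁, …, i_N` such that the `2N`
coordinates `iₖ, g • iₖ` are distinct. A `g`-fixed configuration takes equal values at `iₖ` and
`g • iₖ`, so in particular it lies in `{a}` at both or at neither; by independence this has
probability `(μ₀ {a} ^ 2 + μ₀ {a}ᶜ ^ 2) ^ N`, which tends to `0`.
-/

open MeasureTheory Finset Function
open scoped Pointwise

section

variable {G I X₀ : Type*}

def IsProductMeasure [MeasurableSpace X₀] (μ₀ : Measure X₀) (μ : Measure (I → X₀)) : Prop :=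
  ∀ (s : Finset I) (f : I → Set X₀), (∀ i, MeasurableSet (f i)) →
    μ {x : I → X₀ | ∀ i ∈ s, x i ∈ f i} = ∏ i ∈ s, μ₀ (f i)

theorem sq_add_sq_compl_lt_one [MeasurableSpace X₀] {ν : Measure X₀} [IsProbabilityMeasure ν]
    {A : Set X₀} (hA : MeasurableSet A) (h0 : ν A ≠ 0) (h1 : ν A ≠ 1) :
    ν A ^ 2 + ν Aᶜ ^ 2 < 1 :=
  calc ν A ^ 2 + ν Aᶜ ^ 2
      < ν A + ν Aᶜ := ENNReal.add_lt_add_of_lt_of_le (by finiteness)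
        (by simpa [sq] using ENNReal.mul_lt_mul_left h0 (by finiteness) (prob_le_one.lt_of_ne h1))
        (pow_le_of_le_one zero_le prob_le_one two_ne_zero)
    _ = 1 := by rw [measure_add_measure_compl hA, measure_univ]

section MulAction

variable [Group G] [MulAction G I]

theorem shift_eq_self_iff (g : G) (x : I → X₀) :
    (fun i => x (g⁻¹ • i)) = x ↔ ∀ i, x (g • i) = x i := by
  rw [funext_iff]
  constructor
  · intro h i
    simpa using (h (g • i)).symm
  · intro h i
    simpa using (h (g⁻¹ • i)).symm

theorem exists_card_eq_disjoint_smul_finset [DecidableEq I] {g : G}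
    (hg : {i : I | g • i ≠ i}.Infinite) (N : ℕ) :
    ∃ s : Finset I, #s = N ∧ Disjoint s (g • s) := by
  induction N with
  | zero => exact ⟨∅, rfl, disjoint_empty_left _⟩
  | succ N ih =>
    obtain ⟨s, rfl, hs⟩ := ih
    obtain ⟨i, hi, hi_new⟩ := hg.exists_notMem_finset (s ∪ g • s ∪ g⁻¹ • s)
    simp only [mem_union, mem_inv_smul_finset_iff, not_or] at hi_new
    refine ⟨insert i s, card_insert_of_notMem hi_new.1.1, ?_⟩
    rw [smul_finset_insert, disjoint_insert_left, disjoint_insert_right]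
    exact ⟨by simpa using ⟨Ne.symm hi, hi_new.1.2⟩, hi_new.2, hs⟩

theorem injective_ite_smul_of_disjoint_smul_finset [DecidableEq I] {g : G} {s : Finset I}
    (hs : Disjoint s (g • s)) :
    Injective fun p : s × Bool => if p.2 then (p.1 : I) else g • (p.1 : I) := by
  rintro ⟨i, _ | _⟩ ⟨j, _ | _⟩ h
  all_goals simp only [Bool.false_eq_true, if_true, if_false] at h
  · simp [Subtype.ext (smul_left_cancel g h)]
  · exact (disjoint_left.1 hs j.2 (h ▸ smul_mem_smul_finset i.2)).elim
  · exact (disjoint_left.1 hs i.2 (h ▸ smul_mem_smul_finset j.2)).elim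
  · simp [Subtype.ext h]

end MulAction

namespace IsProductMeasure

variable [MeasurableSpace X₀] {μ₀ : Measure X₀} {μ : Measure (I → X₀)}

theorem measure_forall_mem (hμ : IsProductMeasure μ₀ μ) {ι : Type*} [Fintype ι] {j : ι → I}
    (hj : Injective j) {A : ι → Set X₀} (hA : ∀ k, MeasurableSet (A k)) :
    μ {x | ∀ k, x (j k) ∈ A k} = ∏ k, μ₀ (A k) := by
  classical
  set f : I → Set X₀ := extend j A fun _ => Set.univ
  have hf : ∀ k, f (j k) = A k := fun k => hj.extend_apply _ _ _
  have hf_meas : ∀ i, MeasurableSet (f i) := by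
    intro i
    by_cases hi : ∃ k, j k = i
    · obtain ⟨k, rfl⟩ := hi
      exact hf k ▸ hA k
    · simp [f, extend_apply' _ _ _ hi]
  calc μ {x | ∀ k, x (j k) ∈ A k} = μ {x | ∀ i ∈ univ.image j, x i ∈ f i} := by simp [hf]
    _ = ∏ i ∈ univ.image j, μ₀ (f i) := hμ _ f hf_meas
    _ = ∏ k, μ₀ (A k) := by simp [prod_image fun _ _ _ _ h => hj h, hf]

theorem measure_pairs_mem_same_le (hμ : IsProductMeasure μ₀ μ) {ι β : Type*} [Fintype ι]
    [Fintype β] {j : ι × Bool → I} (hj : Injective j) {A : β → Set X₀}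
    (hA : ∀ b, MeasurableSet (A b)) :
    μ {x | ∀ k, ∃ b, x (j (k, true)) ∈ A b ∧ x (j (k, false)) ∈ A b} ≤
      (∑ b, μ₀ (A b) ^ 2) ^ Fintype.card ι := by
  classical
  calc μ {x | ∀ k, ∃ b, x (j (k, true)) ∈ A b ∧ x (j (k, false)) ∈ A b}
      ≤ μ (⋃ v : ι → β, {x | ∀ p : ι × Bool, x (j p) ∈ A (v p.1)}) := by
        refine measure_mono fun x hx => ?_
        choose v hv using hx
        exact Set.mem_iUnion.2 ⟨v, fun ⟨k, b⟩ => by cases b; exacts [(hv k).2, (hv k).1]⟩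
    _ ≤ ∑ v : ι → β, μ {x | ∀ p : ι × Bool, x (j p) ∈ A (v p.1)} :=
        measure_iUnion_fintype_le _ _
    _ = ∑ v : ι → β, ∏ k, μ₀ (A (v k)) ^ 2 := by
        refine sum_congr rfl fun v _ => ?_
        rw [hμ.measure_forall_mem hj fun p => hA _, Fintype.prod_prod_type]
        simp [sq]
    _ = ∏ _k : ι, ∑ b, μ₀ (A b) ^ 2 := (Fintype.prod_sum fun _ b => μ₀ (A b) ^ 2).symm
    _ = (∑ b, μ₀ (A b) ^ 2) ^ Fintype.card ι := by rw [prod_const, card_univ]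

variable [Group G] [MulAction G I] [MeasurableSingletonClass X₀]

theorem measure_fixed_ne_zero (hμ : IsProductMeasure μ₀ μ) {g : G}
    (hg : {i : I | g • i ≠ i}.Finite) {a : X₀} (ha : μ₀ {a} ≠ 0) :
    μ {x : I → X₀ | (fun i => x (g⁻¹ • i)) = x} ≠ 0 := by
  have hsub : {x : I → X₀ | ∀ i ∈ hg.toFinset, x i ∈ ({a} : Set X₀)} ⊆
      {x | (fun i => x (g⁻¹ • i)) = x} := by
    intro x hx
    have hxa : ∀ i, g • i ≠ i → x i = a := fun i hi => hx i (hg.mem_toFinset.2 hi)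
    refine (shift_eq_self_iff g x).2 fun i => ?_
    by_cases hi : g • i = i
    · rw [hi]
    · rw [hxa i hi, hxa (g • i) (mt (smul_left_cancel g) hi)]
  intro h0
  have := measure_mono_null hsub h0
  rw [hμ _ _ fun _ => measurableSet_singleton a, prod_eq_zero_iff] at this
  obtain ⟨_, _, h⟩ := this
  exact ha h

theorem measure_fixed_eq_zero [IsProbabilityMeasure μ₀] (hμ : IsProductMeasure μ₀ μ) {g : G}
    (hg : {i : I | g • i ≠ i}.Infinite) {a : X₀} (ha0 : μ₀ {a} ≠ 0) (ha1 : μ₀ {a} ≠ 1) :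
    μ {x : I → X₀ | (fun i => x (g⁻¹ • i)) = x} = 0 := by
  classical
  set A : Bool → Set X₀ := fun b => if b then {a} else {a}ᶜ
  have hA : ∀ b, MeasurableSet (A b) := by
    intro b
    cases b <;> simp [A]
  have hc : ∑ b, μ₀ (A b) ^ 2 < 1 := by
    simpa [A] using sq_add_sq_compl_lt_one (measurableSet_singleton a) ha0 ha1
  refine le_antisymm (ge_of_tendsto' (ENNReal.tendsto_pow_atTop_nhds_zero_of_lt_one hc)
    fun N => ?_) zero_le
  obtain ⟨s, rfl, hs⟩ := exists_card_eq_disjoint_smul_finset hg N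
  calc μ {x : I → X₀ | (fun i => x (g⁻¹ • i)) = x}
      ≤ μ {x | ∀ k : s, ∃ b, x k ∈ A b ∧ x (g • k) ∈ A b} := by
        refine measure_mono fun x hx => ?_
        intro k
        rw [(shift_eq_self_iff g x).1 hx]
        by_cases hk : x k = a
        · exact ⟨true, by simp [A, hk]⟩
        · exact ⟨false, by simp [A, hk]⟩
    _ ≤ (∑ b, μ₀ (A b) ^ 2) ^ Fintype.card s :=
        hμ.measure_pairs_mem_same_le (injective_ite_smul_of_disjoint_smul_finset hs) hA
    _ = (∑ b, μ₀ (A b) ^ 2) ^ #s := by rw [Fintype.card_coe]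

end IsProductMeasure

end

theorem generalized_bernoulli_free_iff_of_atomic_general
    {G I X₀ : Type*} [Group G] [MulAction G I]
    [MeasurableSpace X₀] [TopologicalSpace X₀] [PolishSpace X₀] [BorelSpace X₀]
    (μ₀ : Measure X₀) [IsProbabilityMeasure μ₀]
    (hatom : ∃ x : X₀, μ₀ {x} ≠ 0) (hnotdirac : ∀ x : X₀, μ₀ {x} ≠ 1)
    (μ : Measure (I → X₀))
    (hprod : ∀ (s : Finset I) (f : I → Set X₀), (∀ i, MeasurableSet (f i)) →
      μ {x : I → X₀ | ∀ i ∈ s, x i ∈ f i} = ∏ i ∈ s, μ₀ (f i)) :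
    (∀ g : G, g ≠ 1 → μ {x : I → X₀ | (fun i => x (g⁻¹ • i)) = x} = 0) ↔
      ∀ g : G, g ≠ 1 → {i : I | g • i ≠ i}.Infinite := by
  have hμ : IsProductMeasure μ₀ μ := hprod
  obtain ⟨a, ha0⟩ := hatom
  refine ⟨fun hfree g hg hfin => ?_, fun hmoves g hg => ?_⟩
  · exact hμ.measure_fixed_ne_zero hfin ha0 (hfree g hg)
  · exact hμ.measure_fixed_eq_zero (hmoves g hg) ha0 (hnotdirac a)

/-- **Essential freeness of generalized Bernoulli actions, atomic case.**
Let a countable group `G` act on a countable set `I`, and let `(X₀, μ₀)` be a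
standard probability space having at least one atom and not concentrated on a single
atom.  Let `μ` be the product measure `μ₀^I` on `I → X₀` (characterized by its values
on cylinder sets).  The generalized Bernoulli action `G ↷ (X₀, μ₀)^I`,
`(g·x)ᵢ = x_{g⁻¹·i}`, is essentially free — for every `g ≠ e` the set of `x` with
`g·x = x` is null — if and only if every `g ∈ G \ {e}` moves infinitely many
elements of `I`. -/
theorem generalized_bernoulli_free_iff_of_atomic
    {G I X₀ : Type*} [Group G] [Countable G] [Countable I] [MulAction G I]
    [MeasurableSpace X₀] [TopologicalSpace X₀] [PolishSpace X₀] [BorelSpace X₀]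
    (μ₀ : Measure X₀) [IsProbabilityMeasure μ₀]
    (hatom : ∃ x : X₀, μ₀ {x} ≠ 0) (hnotdirac : ∀ x : X₀, μ₀ {x} ≠ 1)
    (μ : Measure (I → X₀)) [IsProbabilityMeasure μ]
    (hprod : ∀ (s : Finset I) (f : I → Set X₀), (∀ i, MeasurableSet (f i)) →
      μ {x : I → X₀ | ∀ i ∈ s, x i ∈ f i} = ∏ i ∈ s, μ₀ (f i)) :
    (∀ g : G, g ≠ 1 → μ {x : I → X₀ | (fun i => x (g⁻¹ • i)) = x} = 0) ↔
      ∀ g : G, g ≠ 1 → {i : I | g • i ≠ i}.Infinite :=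
  generalized_bernoulli_free_iff_of_atomic_general μ₀ hatom hnotdirac μ hprod
end
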